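/- arXiv:2112.04996 — 2 statements merged into one kernel-verified Lean document; each statement's English description precedes it below -/
import Mathlib

section
/- Let n ≥ 1. For all integers a_1, …, a_n, Σ_p ∏_{k : p(k) > k} a_k = ∏_{k=1}^{n−1} ((n − k) · a_k + k + 1), where the sum is over all rooted labeled forests p on n vertices and, for each forest p, the product on the left is over those vertices k that are descending in p (and equals 1 if there are none). -/
/-- A rooted labeled forest on vertices `1, …, n`, encoded by its parent function
extended by `p 0 = 0`: every vertex reaches `0` under iteration. -/
def IsForest {n : ℕ} (p : Fin (n + 1) → Fin (n + 1)) : Prop :=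
  p 0 = 0 ∧ ∀ k : Fin (n + 1), ∃ m : ℕ, p^[m] k = 0

/-- The finite set of all rooted labeled forests on `n` vertices. -/
noncomputable def forestFinset (n : ℕ) : Finset (Fin (n + 1) → Fin (n + 1)) :=
  (Set.toFinite {p : Fin (n + 1) → Fin (n + 1) | IsForest p}).toFinset

/-- The descending vertices of a forest `p` (labels in `{1, …, n}`). -/
def descendingSet (n : ℕ) (p : Fin (n + 1) → Fin (n + 1)) : Finset ℕ :=
  (Finset.Icc 1 n).filter (fun k : ℕ => k < ((p (Fin.ofNat (n + 1) k) : ℕ)))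

namespace Stmt10

open Finset

variable {n : ℕ}

/-- `y` is reachable from `x` by iterating `g`. -/
def reach (g : Fin (n + 1) → Fin (n + 1)) (x y : Fin (n + 1)) : Prop :=
  ∃ k, g^[k] x = y

variable {g c p : Fin (n + 1) → Fin (n + 1)} {x y z : Fin (n + 1)}

lemma reach_refl (g : Fin (n + 1) → Fin (n + 1)) (x : Fin (n + 1)) : reach g x x := ⟨0, rfl⟩

lemma reach_step (g : Fin (n + 1) → Fin (n + 1)) (x : Fin (n + 1)) : reach g x (g x) := ⟨1, rfl⟩

lemma reach_trans (h1 : reach g x y) (h2 : reach g y z) : reach g x z := by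
  obtain ⟨a, ha⟩ := h1; obtain ⟨b, hb⟩ := h2
  exact ⟨b + a, by rw [Function.iterate_add_apply, ha, hb]⟩

lemma reach_zero (h0 : g 0 = 0) (h : reach g 0 x) : x = 0 := by
  obtain ⟨k, hk⟩ := h; rw [Function.iterate_fixed h0] at hk; exact hk.symm

lemma periodic_eq_zero (h0 : g 0 = 0) {m : ℕ} (hm : 0 < m) (hmx : g^[m] x = x)
    (h2 : reach g x 0) : x = 0 := by
  obtain ⟨k, hk⟩ := h2
  have h3 : g^[m * k] x = x := by
    rw [Function.iterate_mul]; exact Function.iterate_fixed hmx k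
  have hk' : k ≤ m * k := Nat.le_mul_of_pos_left k hm
  calc x = g^[m * k] x := h3.symm
    _ = g^[m * k - k] (g^[k] x) := by rw [← Function.iterate_add_apply, Nat.sub_add_cancel hk']
    _ = 0 := by rw [hk]; exact Function.iterate_fixed h0 _

lemma reach_of_iterate (g : Fin (n + 1) → Fin (n + 1)) (k : ℕ) (x : Fin (n + 1)) :
    reach g x (g^[k] x) := ⟨k, rfl⟩

end Stmt10
namespace Stmt10
open Finset
open scoped Classical

variable {n : ℕ} {g c p : Fin (n + 1) → Fin (n + 1)} {x y z : Fin (n + 1)}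

/-- `x` lies on a cycle of `c` (and is not `0`). -/
def inCyc (c : Fin (n + 1) → Fin (n + 1)) (x : Fin (n + 1)) : Prop :=
  x ≠ 0 ∧ ∃ m, 0 < m ∧ c^[m] x = x

noncomputable section

/-- the forward orbit of `x` under `c`, as a finset. -/
def orbit (c : Fin (n + 1) → Fin (n + 1)) (x : Fin (n + 1)) : Finset (Fin (n + 1)) :=
  Finset.univ.filter (fun y => reach c x y)

lemma mem_orbit : y ∈ orbit c x ↔ reach c x y := by simp [orbit]

lemma self_mem_orbit : x ∈ orbit c x := mem_orbit.2 (reach_refl c x)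

/-- minimum of the orbit of `x`. -/
def mnc (c : Fin (n + 1) → Fin (n + 1)) (x : Fin (n + 1)) : Fin (n + 1) :=
  (orbit c x).min' ⟨x, self_mem_orbit⟩

lemma mnc_le (h : y ∈ orbit c x) : mnc c x ≤ y := Finset.min'_le _ _ h

lemma mnc_le_self : mnc c x ≤ x := mnc_le self_mem_orbit

lemma mnc_mem : mnc c x ∈ orbit c x := Finset.min'_mem _ _

lemma reach_mnc (c : Fin (n + 1) → Fin (n + 1)) (x : Fin (n + 1)) : reach c x (mnc c x) :=
  mem_orbit.1 mnc_mem

lemma cyc_back (hx : inCyc c x) (hy : reach c x y) : reach c y x := by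
  obtain ⟨k, hk⟩ := hy
  obtain ⟨_, m, hm, hmx⟩ := hx
  have h3 : c^[m * (k + 1)] x = x := by
    rw [Function.iterate_mul]; exact Function.iterate_fixed hmx _
  have hk' : k ≤ m * (k + 1) := by nlinarith
  refine ⟨m * (k + 1) - k, ?_⟩
  rw [← hk, ← Function.iterate_add_apply, Nat.sub_add_cancel hk', h3]

lemma inCyc_of_reach (h0 : c 0 = 0) (hx : inCyc c x) (hy : reach c x y) : inCyc c y := by
  have hyx : reach c y x := cyc_back hx hy
  have hy0 : y ≠ 0 := by
    rintro rfl
    exact hx.1 (reach_zero h0 hyx)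
  obtain ⟨a, ha⟩ := hy
  obtain ⟨b, hb⟩ := hyx
  rcases Nat.eq_zero_or_pos (a + b) with h | h
  · obtain ⟨rfl, rfl⟩ : a = 0 ∧ b = 0 := by omega
    simp only [Function.iterate_zero, id] at ha
    exact ha ▸ hx
  · exact ⟨hy0, a + b, h, by rw [Function.iterate_add_apply, hb, ha]⟩

lemma orbit_eq_of_reach (hx : inCyc c x) (hy : reach c x y) : orbit c y = orbit c x := by
  ext z
  simp only [mem_orbit]
  exact ⟨fun h => reach_trans hy h, fun h => reach_trans (cyc_back hx hy) h⟩

lemma mnc_congr {s : Fin (n+1)} (h : orbit c x = orbit c s) : mnc c x = mnc c s := by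
  apply le_antisymm
  · exact mnc_le (h ▸ (mnc_mem : mnc c s ∈ orbit c s))
  · exact mnc_le (h ▸ (mnc_mem : mnc c x ∈ orbit c x))

lemma mnc_eq_of_reach (hx : inCyc c x) (hy : reach c x y) : mnc c y = mnc c x :=
  mnc_congr (orbit_eq_of_reach hx hy)

/-- set of minima of cycles of `c`. -/
def minsF (c : Fin (n + 1) → Fin (n + 1)) : Finset (Fin (n + 1)) :=
  Finset.univ.filter (fun x => inCyc c x ∧ mnc c x = x)

lemma mem_minsF : x ∈ minsF c ↔ inCyc c x ∧ mnc c x = x := by simp [minsF]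

lemma mnc_mem_minsF (h0 : c 0 = 0) (hx : inCyc c x) : mnc c x ∈ minsF c := by
  have h1 : inCyc c (mnc c x) := inCyc_of_reach h0 hx (reach_mnc c x)
  exact mem_minsF.2 ⟨h1, mnc_eq_of_reach hx (reach_mnc c x)⟩

/-- the next cycle-minimum below `v` (or `0`). -/
def nxt (c : Fin (n + 1) → Fin (n + 1)) (v : Fin (n + 1)) : Fin (n + 1) :=
  if h : ((minsF c).filter (· < v)).Nonempty then ((minsF c).filter (· < v)).max' h else 0

/-- the largest cycle-minimum (or `0`). -/
def fstv (c : Fin (n + 1) → Fin (n + 1)) : Fin (n + 1) :=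
  if h : (minsF c).Nonempty then (minsF c).max' h else 0

/-- corresponding forest of a code. -/
def phi (c : Fin (n + 1) → Fin (n + 1)) : Fin (n + 1) → Fin (n + 1) := fun x =>
  if x = 0 then 0
  else if x = Fin.last n then fstv c
  else if inCyc c x then (if c x = mnc c x then nxt c (mnc c x) else c x) else c x

lemma nxt_cases (c : Fin (n + 1) → Fin (n + 1)) (v : Fin (n + 1)) :
    (nxt c v = 0 ∧ (minsF c).filter (· < v) = ∅) ∨ (nxt c v ∈ minsF c ∧ nxt c v < v ∧
      ∀ u ∈ minsF c, u < v → u ≤ nxt c v) := by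
  unfold nxt
  split_ifs with h
  · right
    have hm := Finset.max'_mem _ h
    simp only [Finset.mem_filter] at hm
    refine ⟨hm.1, hm.2, fun u hu huv => Finset.le_max' _ u ?_⟩
    exact Finset.mem_filter.2 ⟨hu, huv⟩
  · exact Or.inl ⟨rfl, Finset.not_nonempty_iff_eq_empty.1 h⟩

lemma fstv_cases (c : Fin (n + 1) → Fin (n + 1)) :
    (fstv c = 0 ∧ minsF c = ∅) ∨ (fstv c ∈ minsF c ∧ ∀ u ∈ minsF c, u ≤ fstv c) := by
  unfold fstv
  split_ifs with h
  · right; exact ⟨Finset.max'_mem _ h, fun u hu => Finset.le_max' _ _ hu⟩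
  · left; exact ⟨rfl, Finset.not_nonempty_iff_eq_empty.1 h⟩

end
end Stmt10
namespace Stmt10
open Finset
open scoped Classical

variable {n : ℕ} {g c p : Fin (n + 1) → Fin (n + 1)} {x y z : Fin (n + 1)}

noncomputable section

/-- `x` is an interior vertex of the path from `Fin.last n` to `0` in `p`. -/
def onP (p : Fin (n + 1) → Fin (n + 1)) (x : Fin (n + 1)) : Prop :=
  x ≠ 0 ∧ x ≠ Fin.last n ∧ reach p (Fin.last n) x

/-- the path vertices weakly before `x`. -/
def pref (p : Fin (n + 1) → Fin (n + 1)) (x : Fin (n + 1)) : Finset (Fin (n + 1)) :=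
  Finset.univ.filter (fun y => onP p y ∧ reach p y x)

lemma mem_pref : y ∈ pref p x ↔ onP p y ∧ reach p y x := by simp [pref]

/-- running minimum along the path. -/
def rmn (p : Fin (n + 1) → Fin (n + 1)) (x : Fin (n + 1)) : Fin (n + 1) :=
  if h : (pref p x).Nonempty then (pref p x).min' h else x

/-- corresponding code of a forest. -/
def psi (p : Fin (n + 1) → Fin (n + 1)) : Fin (n + 1) → Fin (n + 1) := fun x =>
  if onP p x then (if p x = 0 ∨ p x < rmn p x then rmn p x else p x)
  else if x = Fin.last n then 0 else p x

variable (hp : IsForest p)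
include hp

lemma forest_periodic (hm : ∃ m, 0 < m ∧ p^[m] x = x) : x = 0 := by
  obtain ⟨m, h1, h2⟩ := hm
  exact periodic_eq_zero hp.1 h1 h2 (hp.2 x)

lemma forest_antisymm (hx : x ≠ 0) (h1 : reach p x y) (h2 : reach p y x) : x = y := by
  obtain ⟨a, ha⟩ := h1
  rcases Nat.eq_zero_or_pos a with rfl | hapos
  · simpa using ha
  · obtain ⟨b, hb⟩ := h2
    exfalso
    refine hx (forest_periodic hp ⟨b + a, by omega, ?_⟩)
    rw [Function.iterate_add_apply, ha, hb]

omit hp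

lemma onP_comparable (hx : onP p x) (hy : onP p y) : reach p x y ∨ reach p y x := by
  obtain ⟨a, ha⟩ := hx.2.2
  obtain ⟨b, hb⟩ := hy.2.2
  rcases le_total a b with h | h
  · left; exact ⟨b - a, by rw [← ha, ← Function.iterate_add_apply, Nat.sub_add_cancel h, hb]⟩
  · right; exact ⟨a - b, by rw [← hb, ← Function.iterate_add_apply, Nat.sub_add_cancel h, ha]⟩

include hp

lemma onP_succ (hl : Fin.last n ≠ (0 : Fin (n + 1))) (hx : onP p x) :
    p x = 0 ∨ onP p (p x) := by
  rcases eq_or_ne (p x) 0 with h | h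
  · exact Or.inl h
  right
  have hr : reach p (Fin.last n) (p x) := reach_trans hx.2.2 (reach_step p x)
  refine ⟨h, ?_, hr⟩
  intro hlast
  obtain ⟨a, ha⟩ := hx.2.2
  refine hl (forest_periodic hp ⟨a + 1, by omega, ?_⟩)
  rw [Function.iterate_succ_apply', ha, hlast]

omit hp

lemma self_mem_pref (hx : onP p x) : x ∈ pref p x := mem_pref.2 ⟨hx, reach_refl p x⟩

lemma pref_nonempty (hx : onP p x) : (pref p x).Nonempty := ⟨x, self_mem_pref hx⟩

lemma rmn_eq_min' (hx : onP p x) : rmn p x = (pref p x).min' (pref_nonempty hx) := by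
  unfold rmn; rw [dif_pos (pref_nonempty hx)]

lemma rmn_mem (hx : onP p x) : rmn p x ∈ pref p x := by
  rw [rmn_eq_min' hx]; exact Finset.min'_mem _ _

lemma rmn_le (hx : onP p x) (hy : y ∈ pref p x) : rmn p x ≤ y := by
  rw [rmn_eq_min' hx]; exact Finset.min'_le _ _ hy

lemma rmn_le_self (hx : onP p x) : rmn p x ≤ x := rmn_le hx (self_mem_pref hx)

lemma rmn_onP (hx : onP p x) : onP p (rmn p x) := (mem_pref.1 (rmn_mem hx)).1

lemma rmn_reach (hx : onP p x) : reach p (rmn p x) x := (mem_pref.1 (rmn_mem hx)).2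

lemma pref_mono (h : reach p y x) : pref p y ⊆ pref p x := by
  intro u hu
  rw [mem_pref] at hu ⊢
  exact ⟨hu.1, reach_trans hu.2 h⟩

lemma rmn_anti (hx : onP p x) (hy : onP p y) (h : reach p y x) : rmn p x ≤ rmn p y :=
  rmn_le hx (pref_mono h (rmn_mem hy))

lemma rmn_idem (hx : onP p x) : rmn p (rmn p x) = rmn p x := by
  have h1 := rmn_onP hx
  apply le_antisymm (rmn_le_self h1)
  exact rmn_le hx (pref_mono (rmn_reach hx) (rmn_mem h1))

include hp

lemma pref_succ (hx : onP p x) (hpx : onP p (p x)) :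
    pref p (p x) = insert (p x) (pref p x) := by
  ext u
  simp only [mem_pref, Finset.mem_insert]
  constructor
  · rintro ⟨hu, hr⟩
    rcases onP_comparable hu hx with h | h
    · exact Or.inr ⟨hu, h⟩
    · obtain ⟨k, hk⟩ := h
      rcases Nat.eq_zero_or_pos k with rfl | hk0
      · exact Or.inr ⟨hu, hk ▸ reach_refl p x⟩
      · left
        have h1 : reach p (p x) u := by
          refine ⟨k - 1, ?_⟩
          have hks : k = (k - 1) + 1 := by omega
          rw [hks] at hk
          rw [← hk, Function.iterate_succ_apply]
        exact forest_antisymm hp hu.1 hr h1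
  · rintro (rfl | hu)
    · exact ⟨hpx, reach_refl _ _⟩
    · exact ⟨hu.1, reach_trans hu.2 (reach_step p x)⟩

lemma rmn_succ (hx : onP p x) (hpx : onP p (p x)) :
    rmn p (p x) = min (rmn p x) (p x) := by
  apply le_antisymm
  · exact le_min (rmn_anti hpx hx (reach_step p x)) (rmn_le_self hpx)
  · have h1 := rmn_mem hpx
    rw [pref_succ hp hx hpx, Finset.mem_insert] at h1
    rcases h1 with h1 | h1
    · rw [h1]; exact min_le_right _ _
    · exact le_trans (min_le_left _ _) (rmn_le hx h1)

end
end Stmt10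
namespace Stmt10
open Finset
open scoped Classical

variable {n : ℕ} {c p : Fin (n + 1) → Fin (n + 1)} {x y z : Fin (n + 1)}

noncomputable section

lemma phi_zero : phi c 0 = 0 := if_pos rfl

lemma inCyc_ne_zero (hx : inCyc c x) : x ≠ 0 := hx.1

lemma inCyc_ne_last (h0 : c 0 = 0) (hcl : c (Fin.last n) = 0) (hx : inCyc c x) :
    x ≠ Fin.last n := by
  rintro rfl
  obtain ⟨hne, m, hm, hmx⟩ := hx
  refine hne ?_
  rw [← hmx]
  obtain ⟨m, rfl⟩ : ∃ m', m = m' + 1 := ⟨m - 1, by omega⟩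
  rw [Function.iterate_succ_apply, hcl]
  exact Function.iterate_fixed h0 m

lemma phi_cyc_interior (h0 : c 0 = 0) (hcl : c (Fin.last n) = 0) (hx : inCyc c x)
    (hne : c x ≠ mnc c x) : phi c x = c x := by
  unfold phi
  rw [if_neg hx.1, if_neg (inCyc_ne_last h0 hcl hx), if_pos hx, if_neg hne]

lemma phi_cyc_end (h0 : c 0 = 0) (hcl : c (Fin.last n) = 0) (hx : inCyc c x)
    (he : c x = mnc c x) : phi c x = nxt c (mnc c x) := by
  unfold phi
  rw [if_neg hx.1, if_neg (inCyc_ne_last h0 hcl hx), if_pos hx, if_pos he]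

lemma phi_noncyc (hx0 : x ≠ 0) (hxl : x ≠ Fin.last n) (hx : ¬ inCyc c x) :
    phi c x = c x := by
  unfold phi
  rw [if_neg hx0, if_neg hxl, if_neg hx]

lemma phi_last (hl : Fin.last n ≠ (0 : Fin (n + 1))) : phi c (Fin.last n) = fstv c := by
  unfold phi
  rw [if_neg hl, if_pos rfl]

lemma cyc_steps (h0 : c 0 = 0) (hcl : c (Fin.last n) = 0) :
    ∀ (d : ℕ) (y : Fin (n + 1)), inCyc c y → c^[d + 1] y = mnc c y →
      reach (phi c) y (nxt c (mnc c y)) := by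
  intro d
  induction d with
  | zero =>
    intro y hy he
    replace he : c y = mnc c y := by simpa using he
    have h1 : phi c y = nxt c (mnc c y) := phi_cyc_end h0 hcl hy he
    exact h1 ▸ reach_step (phi c) y
  | succ d ih =>
    intro y hy he
    by_cases hce : c y = mnc c y
    · have h1 : phi c y = nxt c (mnc c y) := phi_cyc_end h0 hcl hy hce
      exact h1 ▸ reach_step (phi c) y
    · have h1 : phi c y = c y := phi_cyc_interior h0 hcl hy hce
      have hcy : inCyc c (c y) := inCyc_of_reach h0 hy (reach_step c y)
      have hm : mnc c (c y) = mnc c y := mnc_eq_of_reach hy (reach_step c y)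
      have he' : c^[d + 1] (c y) = mnc c (c y) := by
        rw [hm, ← Function.iterate_succ_apply]
        exact he
      have h2 := ih (c y) hcy he'
      rw [hm] at h2
      exact reach_trans (h1 ▸ reach_step (phi c) y) h2

lemma cyc_reach_nxt (h0 : c 0 = 0) (hcl : c (Fin.last n) = 0) (hy : inCyc c y) :
    reach (phi c) y (nxt c (mnc c y)) := by
  obtain ⟨k, hk⟩ := reach_mnc c y
  rcases Nat.eq_zero_or_pos k with rfl | hk0
  · obtain ⟨hne, m, hm, hmx⟩ := hy
    refine cyc_steps h0 hcl (m - 1) y ⟨hne, m, hm, hmx⟩ ?_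
    have : m - 1 + 1 = m := by omega
    rw [this, hmx]
    simpa using hk
  · refine cyc_steps h0 hcl (k - 1) y hy ?_
    have : k - 1 + 1 = k := by omega
    rw [this, hk]

lemma minsF_reach_zero (h0 : c 0 = 0) (hcl : c (Fin.last n) = 0) :
    ∀ m ∈ minsF c, reach (phi c) m 0 := by
  have H : ∀ v : ℕ, ∀ m ∈ minsF c, (m : ℕ) ≤ v → reach (phi c) m 0 := by
    intro v
    induction v with
    | zero =>
      intro m hm hv
      have h1 := (mem_minsF.1 hm).1.1
      have hm0 : (m : ℕ) = 0 := by omega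
      exact absurd (Fin.ext (by simp [hm0])) h1
    | succ v ih =>
      intro m hm hv
      obtain ⟨hcm, hmn⟩ := mem_minsF.1 hm
      have h1 : reach (phi c) m (nxt c m) := by
        have := cyc_reach_nxt h0 hcl hcm
        rwa [hmn] at this
      rcases nxt_cases c m with ⟨h, _⟩ | ⟨h2, h3, _⟩
      · rw [h] at h1; exact h1
      · refine reach_trans h1 (ih (nxt c m) h2 ?_)
        have h4 : (nxt c m : ℕ) < (m : ℕ) := h3
        omega
  exact fun m hm => H (m : ℕ) m hm le_rfl

lemma cyc_reach_zero (h0 : c 0 = 0) (hcl : c (Fin.last n) = 0) (hx : inCyc c x) :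
    reach (phi c) x 0 := by
  have h1 := cyc_reach_nxt h0 hcl hx
  rcases nxt_cases c (mnc c x) with ⟨h, _⟩ | ⟨h2, _, _⟩
  · rw [h] at h1; exact h1
  · exact reach_trans h1 (minsF_reach_zero h0 hcl _ h2)

lemma exists_cyc_or_zero (c : Fin (n + 1) → Fin (n + 1)) (x : Fin (n + 1)) :
    ∃ k, inCyc c (c^[k] x) ∨ c^[k] x = 0 := by
  have main : ∀ a b : ℕ, a < b → c^[a] x = c^[b] x → (inCyc c (c^[a] x) ∨ c^[a] x = 0) := by
    intro a b hab he
    by_cases hz : c^[a] x = 0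
    · exact Or.inr hz
    · refine Or.inl ⟨hz, b - a, by omega, ?_⟩
      rw [← Function.iterate_add_apply, Nat.sub_add_cancel (le_of_lt hab), ← he]
  obtain ⟨i, j, hne, heq⟩ := Fintype.exists_ne_map_eq_of_card_lt
    (fun i : Fin (n + 2) => c^[(i : ℕ)] x) (by simp)
  rcases lt_trichotomy (i : ℕ) (j : ℕ) with h | h | h
  · exact ⟨i, main i j h heq⟩
  · exact absurd (Fin.ext h) hne
  · exact ⟨j, main j i h heq.symm⟩

lemma phi_isForest (h0 : c 0 = 0) (hcl : c (Fin.last n) = 0)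
    (hl : Fin.last n ≠ (0 : Fin (n + 1))) : IsForest (phi c) := by
  refine ⟨phi_zero, ?_⟩
  have key : ∀ (k : ℕ) (x : Fin (n + 1)), (inCyc c (c^[k] x) ∨ c^[k] x = 0) →
      reach (phi c) x 0 := by
    intro k
    induction k with
    | zero =>
      intro x h
      simp only [Function.iterate_zero, id] at h
      rcases h with h | h
      · exact cyc_reach_zero h0 hcl h
      · exact ⟨0, h⟩
    | succ k ih =>
      intro x h
      by_cases hx0 : x = 0
      · exact ⟨0, hx0⟩
      by_cases hxl : x = Fin.last n
      · subst hxl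
        have hstep : reach (phi c) (Fin.last n) (fstv c) :=
          (phi_last hl) ▸ reach_step (phi c) (Fin.last n)
        rcases fstv_cases c with ⟨hz, _⟩ | ⟨hmem, _⟩
        · rw [hz] at hstep; exact hstep
        · exact reach_trans hstep (minsF_reach_zero h0 hcl _ hmem)
      by_cases hxc : inCyc c x
      · exact cyc_reach_zero h0 hcl hxc
      · have h1 : phi c x = c x := phi_noncyc hx0 hxl hxc
        have h2 := ih (c x) (by rw [← Function.iterate_succ_apply]; exact h)
        exact reach_trans (h1 ▸ reach_step (phi c) x) h2
  intro x
  obtain ⟨k, hk⟩ := exists_cyc_or_zero c x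
  exact key k x hk

end
end Stmt10
namespace Stmt10
open Finset
open scoped Classical

variable {n : ℕ} {c p : Fin (n + 1) → Fin (n + 1)} {x y z : Fin (n + 1)}

noncomputable section

lemma phi_cyc_step (h0 : c 0 = 0) (hcl : c (Fin.last n) = 0) (hx : inCyc c x) :
    phi c x = 0 ∨ (inCyc c (phi c x) ∧ mnc c (phi c x) ≤ mnc c x) := by
  by_cases hce : c x = mnc c x
  · rw [phi_cyc_end h0 hcl hx hce]
    rcases nxt_cases c (mnc c x) with ⟨h, _⟩ | ⟨h2, h3, _⟩
    · exact Or.inl h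
    · obtain ⟨hc2, hm2⟩ := mem_minsF.1 h2
      exact Or.inr ⟨hc2, by rw [hm2]; exact le_of_lt h3⟩
  · rw [phi_cyc_interior h0 hcl hx hce]
    exact Or.inr ⟨inCyc_of_reach h0 hx (reach_step c x),
      le_of_eq (mnc_eq_of_reach hx (reach_step c x))⟩

lemma phi_iter_cyc (h0 : c 0 = 0) (hcl : c (Fin.last n) = 0) (hx : inCyc c x) (k : ℕ) :
    (phi c)^[k] x = 0 ∨ (inCyc c ((phi c)^[k] x) ∧ mnc c ((phi c)^[k] x) ≤ mnc c x) := by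
  induction k with
  | zero => exact Or.inr ⟨hx, le_rfl⟩
  | succ k ih =>
    rw [Function.iterate_succ_apply']
    rcases ih with h | ⟨h1, h2⟩
    · rw [h, phi_zero]; exact Or.inl rfl
    · rcases phi_cyc_step h0 hcl h1 with h | ⟨h3, h4⟩
      · exact Or.inl h
      · exact Or.inr ⟨h3, le_trans h4 h2⟩

lemma phi_iter_last (h0 : c 0 = 0) (hcl : c (Fin.last n) = 0)
    (hl : Fin.last n ≠ (0 : Fin (n + 1))) (k : ℕ) (hk : 0 < k) :
    (phi c)^[k] (Fin.last n) = 0 ∨ inCyc c ((phi c)^[k] (Fin.last n)) := by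
  induction k with
  | zero => omega
  | succ k ih =>
    rcases Nat.eq_zero_or_pos k with rfl | hk0
    · rw [Nat.zero_add, Function.iterate_one, phi_last hl]
      rcases fstv_cases c with ⟨h, _⟩ | ⟨h, _⟩
      · exact Or.inl h
      · exact Or.inr (mem_minsF.1 h).1
    · rw [Function.iterate_succ_apply']
      rcases ih hk0 with h | h
      · rw [h, phi_zero]; exact Or.inl rfl
      · rcases phi_cyc_step h0 hcl h with h2 | ⟨h2, _⟩
        · exact Or.inl h2
        · exact Or.inr h2

lemma minsF_reach_from_last (h0 : c 0 = 0) (hcl : c (Fin.last n) = 0)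
    (hl : Fin.last n ≠ (0 : Fin (n + 1))) :
    ∀ m ∈ minsF c, reach (phi c) (Fin.last n) m := by
  have H : ∀ v : ℕ, ∀ m ∈ minsF c, ((minsF c).filter (fun u => m < u)).card = v →
      reach (phi c) (Fin.last n) m := by
    intro v
    induction v using Nat.strong_induction_on with
    | _ v ih =>
      intro m hm hv
      by_cases hS : ((minsF c).filter (fun u => m < u)).Nonempty
      · set m' := ((minsF c).filter (fun u => m < u)).min' hS with hm'def
        have hm'mem := Finset.min'_mem _ hS
        rw [Finset.mem_filter] at hm'mem
        obtain ⟨hm'mins, hmm'⟩ := hm'mem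
        have hnxt : nxt c m' = m := by
          rcases nxt_cases c m' with ⟨_, hempty⟩ | ⟨h2, h3, h4⟩
          · exfalso
            have : m ∈ (minsF c).filter (· < m') := Finset.mem_filter.2 ⟨hm, hmm'⟩
            rw [hempty] at this; simp at this
          · have hle : m ≤ nxt c m' := h4 m hm hmm'
            refine le_antisymm ?_ hle
            by_contra hlt
            push_neg at hlt
            have hmem2 : nxt c m' ∈ (minsF c).filter (fun u => m < u) :=
              Finset.mem_filter.2 ⟨h2, hlt⟩
            exact absurd (Finset.min'_le _ _ hmem2) (not_le.2 h3)
        have hsub : ((minsF c).filter (fun u => m' < u)) ⊂ ((minsF c).filter (fun u => m < u)) := by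
          refine Finset.ssubset_iff_of_subset ?_ |>.2 ?_
          · intro u hu
            rw [Finset.mem_filter] at hu ⊢
            exact ⟨hu.1, lt_trans hmm' hu.2⟩
          · exact ⟨m', Finset.mem_filter.2 ⟨hm'mins, hmm'⟩, by simp⟩
        have hcard : ((minsF c).filter (fun u => m' < u)).card < v :=
          hv ▸ Finset.card_lt_card hsub
        have hreach1 : reach (phi c) (Fin.last n) m' := ih _ hcard m' hm'mins rfl
        obtain ⟨hcm', hmnm'⟩ := mem_minsF.1 hm'mins
        have hreach2 : reach (phi c) m' m := by
          have := cyc_reach_nxt h0 hcl hcm'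
          rwa [hmnm', hnxt] at this
        exact reach_trans hreach1 hreach2
      · rcases fstv_cases c with ⟨_, hempty⟩ | ⟨hmem, hmax⟩
        · rw [hempty] at hm; simp at hm
        · have hle : m ≤ fstv c := hmax m hm
          have hnlt : ¬ m < fstv c := by
            intro hlt
            exact hS ⟨fstv c, Finset.mem_filter.2 ⟨hmem, hlt⟩⟩
          have heq : fstv c = m := le_antisymm (not_lt.1 hnlt) hle
          exact heq ▸ ((phi_last hl) ▸ reach_step (phi c) (Fin.last n))
  exact fun m hm => H _ m hm rfl

lemma phi_follow (h0 : c 0 = 0) (hcl : c (Fin.last n) = 0) :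
    ∀ (k : ℕ) (y : Fin (n + 1)), inCyc c y →
      (∀ j, 0 < j → j ≤ k → c^[j] y ≠ mnc c y) → (phi c)^[k] y = c^[k] y := by
  intro k
  induction k with
  | zero => intro y _ _; rfl
  | succ k ih =>
    intro y hy hj
    have hint : c y ≠ mnc c y := by
      have := hj 1 (by omega) (by omega)
      simpa using this
    have h1 : phi c y = c y := phi_cyc_interior h0 hcl hy hint
    rw [Function.iterate_succ_apply, Function.iterate_succ_apply, h1]
    refine ih (c y) (inCyc_of_reach h0 hy (reach_step c y)) ?_
    intro j hj0 hjk
    rw [← Function.iterate_succ_apply, mnc_eq_of_reach hy (reach_step c y)]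
    exact hj (j + 1) (by omega) (by omega)

lemma reach_phi_mnc_self (h0 : c 0 = 0) (hcl : c (Fin.last n) = 0) (hx : inCyc c x) :
    reach (phi c) (mnc c x) x := by
  have hmmem := mnc_mem_minsF h0 hx
  obtain ⟨hcm, hmm⟩ := mem_minsF.1 hmmem
  have hreach : reach c (mnc c x) x := cyc_back hx (reach_mnc c x)
  have hex : ∃ k, c^[k] (mnc c x) = x := hreach
  set k := Nat.find hex with hkdef
  have hk : c^[k] (mnc c x) = x := Nat.find_spec hex
  rcases Nat.eq_zero_or_pos k with hk0 | hk0
  · rw [hk0] at hk; exact ⟨0, by simpa using hk⟩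
  · have hfollow : (phi c)^[k] (mnc c x) = c^[k] (mnc c x) := by
      refine phi_follow h0 hcl k (mnc c x) hcm ?_
      intro j hj0 hjk hjeq
      rw [hmm] at hjeq
      -- c^[j] m = m, so c^[k-j] m = x with k - j < k
      have : c^[k - j] (mnc c x) = x := by
        conv_lhs => rw [← hjeq]
        rw [← Function.iterate_add_apply, Nat.sub_add_cancel hjk, hk]
      exact Nat.find_min hex (by omega) this
    exact ⟨k, hfollow.trans hk⟩

lemma onP_phi_iff (h0 : c 0 = 0) (hcl : c (Fin.last n) = 0)
    (hl : Fin.last n ≠ (0 : Fin (n + 1))) : onP (phi c) x ↔ inCyc c x := by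
  constructor
  · rintro ⟨hx0, hxl, k, hk⟩
    rcases Nat.eq_zero_or_pos k with rfl | hk0
    · exact absurd hk.symm hxl
    · rcases phi_iter_last h0 hcl hl k hk0 with h | h
      · rw [hk] at h; exact absurd h hx0
      · rwa [hk] at h
  · intro hx
    refine ⟨hx.1, inCyc_ne_last h0 hcl hx, ?_⟩
    exact reach_trans (minsF_reach_from_last h0 hcl hl _ (mnc_mem_minsF h0 hx))
      (reach_phi_mnc_self h0 hcl hx)

lemma rmn_phi (h0 : c 0 = 0) (hcl : c (Fin.last n) = 0)
    (hl : Fin.last n ≠ (0 : Fin (n + 1))) (hx : inCyc c x) :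
    rmn (phi c) x = mnc c x := by
  have honP : onP (phi c) x := (onP_phi_iff h0 hcl hl).2 hx
  apply le_antisymm
  · refine rmn_le honP (mem_pref.2 ⟨?_, reach_phi_mnc_self h0 hcl hx⟩)
    exact (onP_phi_iff h0 hcl hl).2 (mem_minsF.1 (mnc_mem_minsF h0 hx)).1
  · have h1 := rmn_mem honP
    rw [mem_pref] at h1
    obtain ⟨honP', ⟨k, hk⟩⟩ := h1
    have hcyc' : inCyc c (rmn (phi c) x) := (onP_phi_iff h0 hcl hl).1 honP'
    rcases phi_iter_cyc h0 hcl hcyc' k with h | ⟨_, h2⟩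
    · rw [hk] at h; exact absurd h hx.1
    · rw [hk] at h2
      exact le_trans h2 (mnc_le_self)

lemma psi_phi (h0 : c 0 = 0) (hcl : c (Fin.last n) = 0)
    (hl : Fin.last n ≠ (0 : Fin (n + 1))) : psi (phi c) = c := by
  funext x
  by_cases hx0 : x = 0
  · subst hx0
    unfold psi
    rw [if_neg (fun h => (h : onP (phi c) 0).1 rfl), if_neg (fun h => hl h.symm)]
    rw [phi_zero, h0]
  by_cases hxl : x = Fin.last n
  · subst hxl
    unfold psi
    rw [if_neg (fun h => (h : onP (phi c) (Fin.last n)).2.1 rfl), if_pos rfl, hcl]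
  by_cases hxc : inCyc c x
  · have honP : onP (phi c) x := (onP_phi_iff h0 hcl hl).2 hxc
    have hrmn : rmn (phi c) x = mnc c x := rmn_phi h0 hcl hl hxc
    unfold psi
    rw [if_pos honP]
    by_cases hce : c x = mnc c x
    · have hpx : phi c x = nxt c (mnc c x) := phi_cyc_end h0 hcl hxc hce
      have hcond : phi c x = 0 ∨ phi c x < rmn (phi c) x := by
        rcases nxt_cases c (mnc c x) with ⟨h, _⟩ | ⟨_, h3, _⟩
        · exact Or.inl (hpx.trans h)
        · exact Or.inr (by rw [hpx, hrmn]; exact h3)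
      rw [if_pos hcond, hrmn, ← hce]
    · have hpx : phi c x = c x := phi_cyc_interior h0 hcl hxc hce
      have hcond : ¬ (phi c x = 0 ∨ phi c x < rmn (phi c) x) := by
        push_neg
        constructor
        · rw [hpx]
          exact (inCyc_of_reach h0 hxc (reach_step c x)).1
        · rw [hpx, hrmn]
          exact mnc_le (mem_orbit.2 (reach_step c x))
      rw [if_neg hcond, hpx]
  · have honP : ¬ onP (phi c) x := fun h => hxc ((onP_phi_iff h0 hcl hl).1 h)
    unfold psi
    rw [if_neg honP, if_neg hxl]
    exact phi_noncyc hx0 hxl hxc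

end
end Stmt10
namespace Stmt10
open Finset
open scoped Classical

variable {n : ℕ} {c p : Fin (n + 1) → Fin (n + 1)} {x y z : Fin (n + 1)}

noncomputable section

lemma psi_onP_end (hx : onP p x) (hcond : p x = 0 ∨ p x < rmn p x) :
    psi p x = rmn p x := by
  unfold psi; rw [if_pos hx, if_pos hcond]

lemma psi_onP_int (hx : onP p x) (hcond : ¬ (p x = 0 ∨ p x < rmn p x)) :
    psi p x = p x := by
  unfold psi; rw [if_pos hx, if_neg hcond]

lemma psi_off (hx : ¬ onP p x) (hxl : x ≠ Fin.last n) : psi p x = p x := by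
  unfold psi; rw [if_neg hx, if_neg hxl]

lemma psi_last : psi p (Fin.last n) = 0 := by
  unfold psi
  rw [if_neg (fun h => (h : onP p (Fin.last n)).2.1 rfl), if_pos rfl]

lemma psi_zero (hp : IsForest p) (hl : Fin.last n ≠ (0 : Fin (n + 1))) : psi p 0 = 0 := by
  rw [psi_off (fun h => h.1 rfl) (fun h => hl h.symm)]
  exact hp.1

lemma psi_maps_path (hp : IsForest p) (hl : Fin.last n ≠ (0 : Fin (n + 1)))
    (hx : onP p x) : onP p (psi p x) := by
  by_cases hcond : p x = 0 ∨ p x < rmn p x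
  · rw [psi_onP_end hx hcond]; exact rmn_onP hx
  · rw [psi_onP_int hx hcond]
    push_neg at hcond
    rcases onP_succ hp hl hx with h | h
    · exact absurd h hcond.1
    · exact h

/-- iterates of a forest hitting the same nonzero value have equal exponents. -/
lemma forest_iter_inj (hp : IsForest p) {a b : ℕ} (he : p^[a] z = p^[b] z)
    (hne : p^[a] z ≠ 0) : a = b := by
  rcases lt_trichotomy a b with h | h | h
  · exfalso
    have h1 : p^[b - a] (p^[a] z) = p^[a] z := by
      rw [← Function.iterate_add_apply, show b - a + a = b by omega, ← he]
    exact hne (forest_periodic hp ⟨b - a, by omega, h1⟩)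
  · exact h
  · exfalso
    have hne' : p^[b] z ≠ 0 := he ▸ hne
    have h1 : p^[a - b] (p^[b] z) = p^[b] z := by
      rw [← Function.iterate_add_apply, show a - b + b = a by omega, he]
    exact hne' (forest_periodic hp ⟨a - b, by omega, h1⟩)

lemma forest_succ_inj (hp : IsForest p) (hx : onP p x) (hy : onP p y)
    (hne : p x ≠ 0) (hxy : p x = p y) : x = y := by
  obtain ⟨a, ha⟩ := hx.2.2
  obtain ⟨b, hb⟩ := hy.2.2
  have h1 : p^[a + 1] (Fin.last n) = p^[b + 1] (Fin.last n) := by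
    rw [Function.iterate_succ_apply', Function.iterate_succ_apply', ha, hb, hxy]
  have h2 : p^[a + 1] (Fin.last n) ≠ 0 := by
    rw [Function.iterate_succ_apply', ha]; exact hne
  have h3 : a + 1 = b + 1 := forest_iter_inj hp h1 h2
  rw [← ha, ← hb, show a = b by omega]

/-- `reach` to a strictly later vertex passes through the successor. -/
lemma reach_succ_of_ne (h : reach p x y) (hne : y ≠ x) : reach p (p x) y := by
  obtain ⟨k, hk⟩ := h
  rcases Nat.eq_zero_or_pos k with rfl | hk0
  · exact absurd (by simpa using hk) hne.symm
  · refine ⟨k - 1, ?_⟩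
    have hks : k = (k - 1) + 1 := by omega
    rw [hks] at hk
    rw [← hk, Function.iterate_succ_apply]

lemma psi_injOn_path (hp : IsForest p) (hl : Fin.last n ≠ (0 : Fin (n + 1)))
    (hx : onP p x) (hy : onP p y) (hxy : psi p x = psi p y) : x = y := by
  -- helper: a vertex strictly before y which is an `rmn`-fixed point below rmn-stuff
  by_cases hcx : p x = 0 ∨ p x < rmn p x
  · by_cases hcy : p y = 0 ∨ p y < rmn p y
    · -- both block ends: rmn p x = rmn p y
      rw [psi_onP_end hx hcx, psi_onP_end hy hcy] at hxy
      by_contra hne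
      have main : ∀ u v : Fin (n + 1), onP p u → onP p v →
          (p u = 0 ∨ p u < rmn p u) → rmn p u = rmn p v → reach p u v → u ≠ v → False := by
        intro u v hu hv hcu hruv hr hneq
        have hpv : reach p (p u) v := reach_succ_of_ne hr (Ne.symm hneq)
        rcases hcu with h | h
        · rw [h] at hpv
          exact hv.1 (reach_zero hp.1 hpv)
        · have hpu0 : p u ≠ 0 := by
            intro h0; rw [h0] at hpv
            exact hv.1 (reach_zero hp.1 hpv)
          have hpuonP : onP p (p u) := by
            rcases onP_succ hp hl hu with h' | h'
            · exact absurd h' hpu0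
            · exact h'
          have h5 : rmn p (p u) = p u := by
            rw [rmn_succ hp hu hpuonP]; exact min_eq_right (le_of_lt h)
          have h6 : rmn p v ≤ rmn p (p u) := rmn_anti hv hpuonP hpv
          rw [h5, ← hruv] at h6
          exact absurd (lt_of_le_of_lt h6 h) (lt_irrefl _)
      rcases onP_comparable hx hy with h | h
      · exact main x y hx hy hcx hxy h hne
      · exact main y x hy hx hcy hxy.symm h (Ne.symm hne)
    · -- x end, y interior: p y = rmn p x
      rw [psi_onP_end hx hcx, psi_onP_int hy hcy] at hxy
      push_neg at hcy
      exfalso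
      -- m := rmn p x; p y = m, m onP; y ≠ m etc.
      set m := rmn p x with hm
      have hpy : p y = m := hxy.symm
      have hmonP : onP p m := rmn_onP hx
      have hym : reach p y m := by rw [← hpy]; exact reach_step p y
      have hyne : y ≠ m := by
        intro h
        have hpyy : p y = y := by rw [hpy, ← h]
        exact hy.1 (forest_periodic hp ⟨1, by omega, by simpa using hpyy⟩)
      have hyx : reach p y x := reach_trans hym (rmn_reach hx)
      have h1 : pref p y ⊆ pref p x := pref_mono hyx
      have h2 : m ≤ rmn p y := rmn_le hx (h1 (rmn_mem hy))
      have h3 : m ∉ pref p y := by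
        intro hmem
        rw [mem_pref] at hmem
        exact hyne (forest_antisymm hp hy.1 hym hmem.2)
      have h4 : m ≠ rmn p y := fun h => h3 (h ▸ rmn_mem hy)
      have h5 : m < rmn p y := lt_of_le_of_ne h2 h4
      exact absurd (lt_of_le_of_lt (hcy.2.trans_eq hpy) h5) (lt_irrefl _)
  · by_cases hcy : p y = 0 ∨ p y < rmn p y
    · -- symmetric mixed case
      rw [psi_onP_int hx hcx, psi_onP_end hy hcy] at hxy
      push_neg at hcx
      exfalso
      set m := rmn p y with hm
      have hpx : p x = m := hxy
      have hmonP : onP p m := rmn_onP hy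
      have hym : reach p x m := by rw [← hpx]; exact reach_step p x
      have hyne : x ≠ m := by
        intro h
        have hpxx : p x = x := by rw [hpx, ← h]
        exact hx.1 (forest_periodic hp ⟨1, by omega, by simpa using hpxx⟩)
      have hyx : reach p x y := reach_trans hym (rmn_reach hy)
      have h1 : pref p x ⊆ pref p y := pref_mono hyx
      have h2 : m ≤ rmn p x := rmn_le hy (h1 (rmn_mem hx))
      have h3 : m ∉ pref p x := by
        intro hmem
        rw [mem_pref] at hmem
        exact hyne (forest_antisymm hp hx.1 hym hmem.2)
      have h4 : m ≠ rmn p x := fun h => h3 (h ▸ rmn_mem hx)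
      have h5 : m < rmn p x := lt_of_le_of_ne h2 h4
      exact absurd (lt_of_le_of_lt (hcx.2.trans_eq hpx) h5) (lt_irrefl _)
    · rw [psi_onP_int hx hcx, psi_onP_int hy hcy] at hxy
      push_neg at hcx
      exact forest_succ_inj hp hx hy hcx.1 hxy

lemma exists_periodic_of_injOn (f : Fin (n + 1) → Fin (n + 1)) (s : Finset (Fin (n + 1)))
    (hmaps : ∀ z ∈ s, f z ∈ s) (hinj : ∀ z ∈ s, ∀ w ∈ s, f z = f w → z = w)
    (hx : x ∈ s) : ∃ m, 0 < m ∧ f^[m] x = x := by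
  have hiter : ∀ k, f^[k] x ∈ s := by
    intro k
    induction k with
    | zero => exact hx
    | succ k ih => rw [Function.iterate_succ_apply']; exact hmaps _ ih
  have cancel : ∀ a b : ℕ, f^[a] x = f^[a + b] x → x = f^[b] x := by
    intro a
    induction a with
    | zero => intro b h; simpa using h
    | succ a ih =>
      intro b h
      rw [show a + 1 + b = (a + b) + 1 by omega] at h
      rw [Function.iterate_succ_apply', Function.iterate_succ_apply'] at h
      exact ih b (hinj _ (hiter a) _ (hiter (a + b)) h)
  obtain ⟨i, j, hne, heq⟩ := Fintype.exists_ne_map_eq_of_card_lt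
    (fun i : Fin (n + 2) => f^[(i : ℕ)] x) (by simp)
  have main : ∀ a b : ℕ, a < b → f^[a] x = f^[b] x → ∃ m, 0 < m ∧ f^[m] x = x := by
    intro a b hab he
    refine ⟨b - a, by omega, ?_⟩
    exact (cancel a (b - a) (by rw [show a + (b - a) = b by omega]; exact he)).symm
  rcases lt_trichotomy (i : ℕ) (j : ℕ) with h | h | h
  · exact main _ _ h heq
  · exact absurd (Fin.ext h) hne
  · exact main _ _ h heq.symm

/-- the cyclic vertices of `psi p` are exactly the interior path vertices of `p`. -/
lemma inCyc_psi_iff (hp : IsForest p) (hl : Fin.last n ≠ (0 : Fin (n + 1))) :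
    inCyc (psi p) x ↔ onP p x := by
  constructor
  · rintro ⟨hx0, m, hm, hmx⟩
    by_contra hoff
    -- x is not on the path; show x can't be (psi p)-periodic
    have hxl : x ≠ Fin.last n := by
      rintro rfl
      have h1 : psi p (Fin.last n) = 0 := psi_last
      obtain ⟨m', rfl⟩ : ∃ m', m = m' + 1 := ⟨m - 1, by omega⟩
      rw [Function.iterate_succ_apply, h1,
        Function.iterate_fixed (psi_zero hp hl)] at hmx
      exact hx0 hmx.symm
    -- invariant set S = path ∪ {0} is psi-invariant
    have hS : ∀ z, (onP p z ∨ z = 0) → (onP p (psi p z) ∨ psi p z = 0) := by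
      rintro z (hz | rfl)
      · exact Or.inl (psi_maps_path hp hl hz)
      · exact Or.inr (psi_zero hp hl)
    have hSiter : ∀ (j k : ℕ), j ≤ k → (onP p ((psi p)^[j] x) ∨ (psi p)^[j] x = 0) →
        (onP p ((psi p)^[k] x) ∨ (psi p)^[k] x = 0) := by
      intro j k hjk h
      obtain ⟨d, rfl⟩ : ∃ d, k = j + d := ⟨k - j, by omega⟩
      induction d with
      | zero => simpa using h
      | succ d ih =>
        rw [show j + (d + 1) = (j + d) + 1 by omega, Function.iterate_succ_apply']
        exact hS _ (ih (by omega))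
    -- no iterate of x can enter S (else x itself would be in S)
    have hnotS : ∀ j : ℕ, ¬ (onP p ((psi p)^[j] x) ∨ (psi p)^[j] x = 0) := by
      intro j hj
      -- pick a multiple of m at least j
      have hx' : onP p x ∨ x = 0 := by
        have h2 := hSiter j (m * (j + 1)) (by nlinarith) hj
        have h3 : (psi p)^[m * (j + 1)] x = x := by
          rw [Function.iterate_mul]
          exact Function.iterate_fixed hmx _
        rwa [h3] at h2
      rcases hx' with h | h
      · exact hoff h
      · exact hx0 h
    -- also no iterate is `last`
    have hnotlast : ∀ j : ℕ, (psi p)^[j] x ≠ Fin.last n := by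
      intro j hj
      refine hnotS (j + 1) (Or.inr ?_)
      rw [Function.iterate_succ_apply', hj, psi_last]
    -- hence psi = p along the orbit
    have heq : ∀ j : ℕ, (psi p)^[j] x = p^[j] x := by
      intro j
      induction j with
      | zero => rfl
      | succ j ih =>
        rw [Function.iterate_succ_apply', Function.iterate_succ_apply', ih]
        rw [← ih]
        refine psi_off (fun h => hnotS j (Or.inl h)) (hnotlast j)
    rw [heq] at hmx
    exact hx0 (forest_periodic hp ⟨m, hm, hmx⟩)
  · intro hx
    refine ⟨hx.1, ?_⟩
    exact exists_periodic_of_injOn (psi p) (Finset.univ.filter (fun z => onP p z))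
      (fun z hz => Finset.mem_filter.2 ⟨Finset.mem_univ _,
        psi_maps_path hp hl (Finset.mem_filter.1 hz).2⟩)
      (fun z hz w hw h => psi_injOn_path hp hl (Finset.mem_filter.1 hz).2
        (Finset.mem_filter.1 hw).2 h)
      (Finset.mem_filter.2 ⟨Finset.mem_univ _, hx⟩)

end
end Stmt10
namespace Stmt10
open Finset
open scoped Classical

variable {n : ℕ} {c p : Fin (n + 1) → Fin (n + 1)} {x y z : Fin (n + 1)}

noncomputable section

lemma rmn_psi_step (hp : IsForest p) (hl : Fin.last n ≠ (0 : Fin (n + 1)))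
    (hz : onP p z) : rmn p (psi p z) = rmn p z := by
  by_cases hcond : p z = 0 ∨ p z < rmn p z
  · rw [psi_onP_end hz hcond]
    exact rmn_idem hz
  · rw [psi_onP_int hz hcond]
    push_neg at hcond
    have hpz : onP p (p z) := by
      rcases onP_succ hp hl hz with h | h
      · exact absurd h hcond.1
      · exact h
    rw [rmn_succ hp hz hpz]
    exact min_eq_left hcond.2

lemma rmn_psi_iter (hp : IsForest p) (hl : Fin.last n ≠ (0 : Fin (n + 1)))
    (hz : onP p z) (k : ℕ) :
    onP p ((psi p)^[k] z) ∧ rmn p ((psi p)^[k] z) = rmn p z := by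
  induction k with
  | zero => exact ⟨hz, rfl⟩
  | succ k ih =>
    rw [Function.iterate_succ_apply']
    exact ⟨psi_maps_path hp hl ih.1, (rmn_psi_step hp hl ih.1).trans ih.2⟩

lemma reach_psi_of_reach (hp : IsForest p) (hl : Fin.last n ≠ (0 : Fin (n + 1))) :
    ∀ (k : ℕ) (y x : Fin (n + 1)), onP p y → onP p x → p^[k] y = x →
      rmn p y = rmn p x → reach (psi p) y x := by
  intro k
  induction k with
  | zero =>
    intro y x _ _ h _
    exact h ▸ reach_refl _ _
  | succ k ih =>
    intro y x hy hx h hr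
    have hstep : p^[k] (p y) = x := by
      rw [← Function.iterate_succ_apply]; exact h
    by_cases hpy0 : p y = 0
    · exfalso
      rw [hpy0, Function.iterate_fixed hp.1] at hstep
      exact hx.1 hstep.symm
    have hpy : onP p (p y) := by
      rcases onP_succ hp hl hy with h' | h'
      · exact absurd h' hpy0
      · exact h'
    by_cases hlt : p y < rmn p y
    · exfalso
      have h1 : rmn p (p y) = p y := by
        rw [rmn_succ hp hy hpy]; exact min_eq_right (le_of_lt hlt)
      have h2 : rmn p x ≤ rmn p (p y) := rmn_anti hx hpy ⟨k, hstep⟩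
      rw [h1, ← hr] at h2
      exact absurd (lt_of_le_of_lt h2 hlt) (lt_irrefl _)
    · have hcond : ¬ (p y = 0 ∨ p y < rmn p y) := not_or.2 ⟨hpy0, hlt⟩
      have h1 : rmn p (p y) = rmn p y := by
        rw [rmn_succ hp hy hpy]; exact min_eq_left (not_lt.1 hlt)
      have h2 : reach (psi p) (p y) x := ih (p y) x hpy hx hstep (h1.trans hr)
      have h3 : reach (psi p) y (p y) := (psi_onP_int hy hcond) ▸ reach_step (psi p) y
      exact reach_trans h3 h2

lemma mnc_psi (hp : IsForest p) (hl : Fin.last n ≠ (0 : Fin (n + 1))) (hx : onP p x) :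
    mnc (psi p) x = rmn p x := by
  apply le_antisymm
  · -- rmn p x ∈ orbit (psi p) x
    have hrmn_onP : onP p (rmn p x) := rmn_onP hx
    obtain ⟨k, hk⟩ := rmn_reach hx
    have h1 : reach (psi p) (rmn p x) x :=
      reach_psi_of_reach hp hl k (rmn p x) x hrmn_onP hx hk (rmn_idem hx)
    have h2 : inCyc (psi p) (rmn p x) := (inCyc_psi_iff hp hl).2 hrmn_onP
    have h3 : reach (psi p) x (rmn p x) := cyc_back h2 h1
    exact mnc_le (mem_orbit.2 h3)
  · obtain ⟨k, hk⟩ := reach_mnc (psi p) x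
    obtain ⟨h1, h2⟩ := rmn_psi_iter hp hl hx k
    rw [hk] at h1 h2
    exact h2 ▸ rmn_le_self h1

lemma mem_minsF_psi (hp : IsForest p) (hl : Fin.last n ≠ (0 : Fin (n + 1))) :
    x ∈ minsF (psi p) ↔ onP p x ∧ rmn p x = x := by
  rw [mem_minsF]
  constructor
  · rintro ⟨h1, h2⟩
    have h3 : onP p x := (inCyc_psi_iff hp hl).1 h1
    exact ⟨h3, (mnc_psi hp hl h3).symm.trans h2⟩
  · rintro ⟨h1, h2⟩
    exact ⟨(inCyc_psi_iff hp hl).2 h1, (mnc_psi hp hl h1).trans h2⟩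

lemma minsF_below (hp : IsForest p) (hl : Fin.last n ≠ (0 : Fin (n + 1)))
    (hx : onP p x) {u : Fin (n + 1)} (hu1 : onP p u) (hu2 : rmn p u = u)
    (hult : u < rmn p x) : reach p (p x) u := by
  rcases onP_comparable hu1 hx with h | h
  · exfalso
    have : u ∈ pref p x := mem_pref.2 ⟨hu1, h⟩
    exact absurd (lt_of_le_of_lt (rmn_le hx this) hult) (lt_irrefl _)
  · have hne : u ≠ x := by
      intro h'
      rw [h'] at hult
      exact absurd (lt_of_le_of_lt (rmn_le_self hx) hult) (lt_irrefl _)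
    exact reach_succ_of_ne h hne

lemma phi_psi (hp : IsForest p) (hl : Fin.last n ≠ (0 : Fin (n + 1))) :
    phi (psi p) = p := by
  have h0' : psi p 0 = 0 := psi_zero hp hl
  have hcl' : psi p (Fin.last n) = 0 := psi_last
  funext x
  by_cases hx0 : x = 0
  · subst hx0; rw [phi_zero, hp.1]
  by_cases hxl : x = Fin.last n
  · subst hxl
    rw [phi_last hl]
    by_cases hpl : p (Fin.last n) = 0
    · -- no path: minsF empty
      have hempty : minsF (psi p) = ∅ := by
        rw [Finset.eq_empty_iff_forall_notMem]
        intro u hu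
        obtain ⟨hu1, _⟩ := (mem_minsF_psi hp hl).1 hu
        obtain ⟨k, hk⟩ := hu1.2.2
        rcases Nat.eq_zero_or_pos k with rfl | hk0
        · exact hu1.2.1 hk.symm
        · have : p^[k] (Fin.last n) = 0 := by
            have hks : k = (k - 1) + 1 := by omega
            rw [hks, Function.iterate_succ_apply, hpl, Function.iterate_fixed hp.1]
          rw [hk] at this
          exact hu1.1 this
      rcases fstv_cases (psi p) with ⟨h1, _⟩ | ⟨h1, _⟩
      · rw [h1, hpl]
      · rw [hempty] at h1; simp at h1
    · -- fstv = p last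
      set v := p (Fin.last n) with hv
      have hvonP : onP p v := by
        refine ⟨hpl, ?_, ⟨1, by simp [hv]⟩⟩
        intro h
        refine hl (forest_periodic hp ⟨1, by omega, ?_⟩)
        have h2 : p (Fin.last n) = Fin.last n := by rw [← hv, h]
        simpa using h2
      have hrmnv : rmn p v = v := by
        apply le_antisymm (rmn_le_self hvonP)
        have hmem := rmn_mem hvonP
        rw [mem_pref] at hmem
        obtain ⟨hu1, hu2⟩ := hmem
        -- any u with onP u and reach u v equals v
        obtain ⟨a, ha⟩ := hu1.2.2
        obtain ⟨b, hb⟩ := hu2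
        have hba : p^[b + a] (Fin.last n) = v := by
          rw [Function.iterate_add_apply, ha, hb]
        have hv1 : p^[1] (Fin.last n) = v := by simp [hv]
        have : b + a = 1 := forest_iter_inj hp (hba.trans hv1.symm) (by rw [hba]; exact hpl)
        have ha0 : a ≠ 0 := by
          intro h'
          rw [h'] at ha
          exact hu1.2.1 (by simpa using ha.symm)
        obtain ⟨rfl, rfl⟩ : b = 0 ∧ a = 1 := by omega
        rw [← ha, ← hv1]
      have hvmins : v ∈ minsF (psi p) := (mem_minsF_psi hp hl).2 ⟨hvonP, hrmnv⟩
      have hvmax : ∀ u ∈ minsF (psi p), u ≤ v := by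
        intro u hu
        obtain ⟨hu1, hu2⟩ := (mem_minsF_psi hp hl).1 hu
        obtain ⟨a, ha⟩ := hu1.2.2
        rcases Nat.eq_zero_or_pos a with rfl | ha0
        · exact absurd ha.symm hu1.2.1
        · have hru : reach p v u := by
            refine ⟨a - 1, ?_⟩
            have hks : a = (a - 1) + 1 := by omega
            rw [hks, Function.iterate_succ_apply] at ha
            exact ha
          have : v ∈ pref p u := mem_pref.2 ⟨hvonP, hru⟩
          exact hu2 ▸ rmn_le hu1 this
      rcases fstv_cases (psi p) with ⟨_, h2⟩ | ⟨h1, h2⟩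
      · rw [h2] at hvmins; simp at hvmins
      · exact le_antisymm (hvmax _ h1) (h2 v hvmins)
  -- now x ≠ 0, x ≠ last
  by_cases honP : onP p x
  · have hcyc : inCyc (psi p) x := (inCyc_psi_iff hp hl).2 honP
    have hmnc : mnc (psi p) x = rmn p x := mnc_psi hp hl honP
    by_cases hc0 : p x = 0
    · have hce : psi p x = mnc (psi p) x := by
        rw [psi_onP_end honP (Or.inl hc0), hmnc]
      rw [phi_cyc_end h0' hcl' hcyc hce, hmnc]
      -- nxt = 0 = p x
      have hempty : (minsF (psi p)).filter (· < rmn p x) = ∅ := by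
        rw [Finset.eq_empty_iff_forall_notMem]
        intro u hu
        rw [Finset.mem_filter] at hu
        obtain ⟨hu1, hu2⟩ := (mem_minsF_psi hp hl).1 hu.1
        have := minsF_below hp hl honP hu1 hu2 hu.2
        rw [hc0] at this
        exact hu1.1 (reach_zero hp.1 this)
      rcases nxt_cases (psi p) (rmn p x) with ⟨h1, _⟩ | ⟨h1, h2, _⟩
      · rw [h1, hc0]
      · exfalso
        have : nxt (psi p) (rmn p x) ∈ (minsF (psi p)).filter (· < rmn p x) :=
          Finset.mem_filter.2 ⟨h1, h2⟩
        rw [hempty] at this; simp at this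
    by_cases hlt : p x < rmn p x
    · have hce : psi p x = mnc (psi p) x := by
        rw [psi_onP_end honP (Or.inr hlt), hmnc]
      rw [phi_cyc_end h0' hcl' hcyc hce, hmnc]
      -- nxt = p x
      have hpxonP : onP p (p x) := by
        rcases onP_succ hp hl honP with h' | h'
        · exact absurd h' hc0
        · exact h'
      have hrmnpx : rmn p (p x) = p x := by
        rw [rmn_succ hp honP hpxonP]; exact min_eq_right (le_of_lt hlt)
      have hwmem : p x ∈ minsF (psi p) := (mem_minsF_psi hp hl).2 ⟨hpxonP, hrmnpx⟩
      rcases nxt_cases (psi p) (rmn p x) with ⟨_, h2⟩ | ⟨h1, h2, h3⟩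
      · exfalso
        have : p x ∈ (minsF (psi p)).filter (· < rmn p x) :=
          Finset.mem_filter.2 ⟨hwmem, hlt⟩
        rw [h2] at this; simp at this
      · refine le_antisymm ?_ (h3 _ hwmem hlt)
        obtain ⟨hu1, hu2⟩ := (mem_minsF_psi hp hl).1 h1
        have hr := minsF_below hp hl honP hu1 hu2 h2
        have : p x ∈ pref p (nxt (psi p) (rmn p x)) := mem_pref.2 ⟨hpxonP, hr⟩
        exact hu2 ▸ rmn_le hu1 this
    · -- interior
      have hcond : ¬ (p x = 0 ∨ p x < rmn p x) := not_or.2 ⟨hc0, hlt⟩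
      have hpsix : psi p x = p x := psi_onP_int honP hcond
      have hne : psi p x ≠ mnc (psi p) x := by
        rw [hpsix, hmnc]
        intro h
        have h1 : reach p (rmn p x) x := rmn_reach honP
        have h2 : reach p x (rmn p x) := h ▸ reach_step p x
        have h3 : x = rmn p x := forest_antisymm hp hx0 h2 h1
        rw [← h3] at h
        exact hx0 (forest_periodic hp ⟨1, by omega, by simpa using h⟩)
      rw [phi_cyc_interior h0' hcl' hcyc hne, hpsix]
  · have hncyc : ¬ inCyc (psi p) x := fun h => honP ((inCyc_psi_iff hp hl).1 h)
    rw [phi_noncyc hx0 hxl hncyc]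
    exact psi_off honP hxl

end
end Stmt10
namespace Stmt10
open Finset
open scoped Classical

variable {n : ℕ} {c p : Fin (n + 1) → Fin (n + 1)} {x y z : Fin (n + 1)}

noncomputable section

lemma psi_descend_iff (hp : IsForest p) (hl : Fin.last n ≠ (0 : Fin (n + 1)))
    (x : Fin (n + 1)) : x < psi p x ↔ x < p x := by
  by_cases honP : onP p x
  · by_cases hcond : p x = 0 ∨ p x < rmn p x
    · rw [psi_onP_end honP hcond]
      have h1 : ¬ x < rmn p x := not_lt.2 (rmn_le_self honP)
      have h2 : ¬ x < p x := by
        rcases hcond with h | h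
        · rw [h]
          exact fun hlt => absurd (lt_of_le_of_lt (Fin.zero_le x) hlt) (lt_irrefl _)
        · exact not_lt.2 (le_of_lt (lt_of_lt_of_le h (rmn_le_self honP)))
      simp [h1, h2]
    · rw [psi_onP_int honP hcond]
  · by_cases hxl : x = Fin.last n
    · subst hxl
      rw [psi_last]
      have h1 : ¬ Fin.last n < (0 : Fin (n + 1)) := not_lt.2 (Fin.zero_le _)
      have h2 : ¬ Fin.last n < p (Fin.last n) := not_lt.2 (Fin.le_last _)
      simp [h1, h2]
    · rw [psi_off honP hxl]

lemma descendingSet_psi (hp : IsForest p) (hl : Fin.last n ≠ (0 : Fin (n + 1))) :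
    descendingSet n (psi p) = descendingSet n p := by
  unfold descendingSet
  apply Finset.filter_congr
  intro k hk
  rw [Finset.mem_Icc] at hk
  have h := psi_descend_iff hp hl (Fin.ofNat (n + 1) k)
  have hval : ((Fin.ofNat (n + 1) k : Fin (n + 1)) : ℕ) = k := by
    rw [Fin.val_ofNat]; exact Nat.mod_eq_of_lt (by omega)
  rw [Fin.lt_def, Fin.lt_def, hval] at h
  simpa using h

end
end Stmt10
namespace Stmt10
open Finset
open scoped Classical

variable {n : ℕ} {c p : Fin (n + 1) → Fin (n + 1)} {x y z : Fin (n + 1)}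

noncomputable section

/-- the set of codes: free on `1, …, n-1`, zero at `0` and `n`. -/
def codeFinset (n : ℕ) : Finset (Fin (n + 1) → Fin (n + 1)) :=
  Finset.univ.filter (fun c => c 0 = 0 ∧ c (Fin.last n) = 0)

lemma mem_codeFinset : c ∈ codeFinset n ↔ c 0 = 0 ∧ c (Fin.last n) = 0 := by
  simp [codeFinset]

lemma mem_forestFinset : p ∈ forestFinset n ↔ IsForest p := by
  unfold forestFinset
  rw [Set.Finite.mem_toFinset]
  rfl

lemma sum_forest_eq_sum_code (hn : 1 ≤ n) (a : ℕ → ℤ) :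
    ∑ p ∈ forestFinset n, ∏ k ∈ descendingSet n p, a k
      = ∑ c ∈ codeFinset n, ∏ k ∈ descendingSet n c, a k := by
  have hl : Fin.last n ≠ (0 : Fin (n + 1)) := by
    intro h
    have h2 := congrArg Fin.val h
    simp [Fin.val_last] at h2
    omega
  refine Finset.sum_nbij' psi phi ?_ ?_ ?_ ?_ ?_
  · intro p hp
    have hp' := mem_forestFinset.1 hp
    exact mem_codeFinset.2 ⟨psi_zero hp' hl, psi_last⟩
  · intro c hc
    obtain ⟨h0, hclast⟩ := mem_codeFinset.1 hc
    exact mem_forestFinset.2 (phi_isForest h0 hclast hl)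
  · intro p hp
    exact phi_psi (mem_forestFinset.1 hp) hl
  · intro c hc
    obtain ⟨h0, hclast⟩ := mem_codeFinset.1 hc
    exact psi_phi h0 hclast hl
  · intro p hp
    rw [descendingSet_psi (mem_forestFinset.1 hp) hl]

lemma code_weight (a : ℕ → ℤ) (h0 : c 0 = 0) :
    ∏ k ∈ descendingSet n c, a k
      = ∏ j : Fin (n + 1), (if j < c j then a (j : ℕ) else 1) := by
  set G : ℕ → ℤ := fun i => if i < ((c (Fin.ofNat (n + 1) i)) : ℕ) then a i else 1 with hG
  have hA : ∏ k ∈ descendingSet n c, a k = ∏ i ∈ Finset.Icc 1 n, G i := by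
    unfold descendingSet
    rw [Finset.prod_filter]
  have hB : ∏ i ∈ Finset.Icc 1 n, G i = ∏ i ∈ Finset.range (n + 1), G i := by
    apply Finset.prod_subset
    · intro i hi
      rw [Finset.mem_Icc] at hi
      rw [Finset.mem_range]
      omega
    · intro i hi hni
      rw [Finset.mem_range] at hi
      rw [Finset.mem_Icc] at hni
      have hi0 : i = 0 := by omega
      subst hi0
      rw [hG]
      simp only [Fin.ofNat_zero, h0]
      simp
  have hC : ∏ i ∈ Finset.range (n + 1), G i = ∏ j : Fin (n + 1), G (j : ℕ) :=
    (Fin.prod_univ_eq_prod_range G (n + 1)).symm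
  have hD : ∏ j : Fin (n + 1), G (j : ℕ) = ∏ j : Fin (n + 1), (if j < c j then a (j : ℕ) else 1) := by
    apply Finset.prod_congr rfl
    intro j _
    simp only [hG, Fin.ofNat_val_eq_self, Fin.lt_def]
  rw [hA, hB, hC, hD]

/-- the per-vertex choice sets for codes. -/
def codeT (n : ℕ) : Fin (n + 1) → Finset (Fin (n + 1)) :=
  fun j => if j = 0 ∨ j = Fin.last n then {0} else Finset.univ

lemma code_sum (hn : 1 ≤ n) (a : ℕ → ℤ) :
    ∑ c ∈ codeFinset n, ∏ k ∈ descendingSet n c, a k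
      = ∏ k ∈ Finset.Icc 1 (n - 1), (((n : ℤ) - k) * a k + k + 1) := by
  have hpi : codeFinset n = Fintype.piFinset (codeT n) := by
    ext c
    rw [mem_codeFinset, Fintype.mem_piFinset]
    constructor
    · rintro ⟨h1, h2⟩ j
      unfold codeT
      split_ifs with hj
      · rcases hj with rfl | rfl
        · simp [h1]
        · simp [h2]
      · exact Finset.mem_univ _
    · intro h
      have h1 := h 0
      have h2 := h (Fin.last n)
      unfold codeT at h1 h2
      rw [if_pos (Or.inl rfl)] at h1
      rw [if_pos (Or.inr rfl)] at h2
      simp at h1 h2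
      exact ⟨h1, h2⟩
  have hw : ∀ c ∈ codeFinset n, ∏ k ∈ descendingSet n c, a k
      = ∏ j : Fin (n + 1), (if j < c j then a (j : ℕ) else 1) := by
    intro c hc
    exact code_weight a (mem_codeFinset.1 hc).1
  rw [Finset.sum_congr rfl hw, hpi]
  rw [← Finset.prod_univ_sum (codeT n) (fun j v => if j < v then a (j : ℕ) else 1)]
  -- evaluate each factor
  set H : ℕ → ℤ := fun i => if i = 0 ∨ i = n then 1 else ((n : ℤ) - i) * a i + i + 1 with hH
  have hfac : ∀ j : Fin (n + 1),
      (∑ v ∈ codeT n j, (if j < v then a (j : ℕ) else 1)) = H (j : ℕ) := by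
    intro j
    have hiff : (j = 0 ∨ j = Fin.last n) ↔ ((j : ℕ) = 0 ∨ (j : ℕ) = n) := by
      constructor
      · rintro (rfl | rfl)
        · exact Or.inl rfl
        · exact Or.inr (Fin.val_last n)
      · rintro (h | h)
        · exact Or.inl (Fin.ext (by simp [h]))
        · exact Or.inr (Fin.ext (by simp [Fin.val_last, h]))
    unfold codeT
    simp only [hH]
    by_cases hj : j = 0 ∨ j = Fin.last n
    · rw [if_pos hj, if_pos (hiff.1 hj)]
      rw [Finset.sum_singleton]
      rw [if_neg (not_lt.2 (Fin.zero_le j))]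
    · rw [if_neg hj, if_neg (fun h => hj (hiff.2 h))]
      rw [Finset.sum_ite, Finset.sum_const, Finset.sum_const]
      have hcard1 : (Finset.univ.filter (fun v => j < v)).card = n - (j : ℕ) := by
        rw [Finset.filter_lt_eq_Ioi, Fin.card_Ioi]
        omega
      have hcard2 : (Finset.univ.filter (fun v => ¬ j < v)).card = (j : ℕ) + 1 := by
        have heq : (Finset.univ.filter (fun v => ¬ j < v)) = Finset.Iic j := by
          rw [← Finset.filter_ge_eq_Iic]
          apply Finset.filter_congr
          intro v _
          simp [not_lt]
        rw [heq, Fin.card_Iic]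
      rw [hcard1, hcard2]
      have hjlt : (j : ℕ) < n := by
        push_neg at hj
        have h1 : (j : ℕ) ≤ n := by omega
        rcases lt_or_eq_of_le h1 with h | h
        · exact h
        · exact absurd (Fin.ext (by simp [Fin.val_last, h])) hj.2
      simp only [nsmul_eq_mul, mul_one]
      rw [Nat.cast_sub (le_of_lt hjlt)]
      push_cast
      ring
  rw [Finset.prod_congr rfl (fun j _ => hfac j)]
  rw [Fin.prod_univ_eq_prod_range H (n + 1)]
  have hB : ∏ i ∈ Finset.Icc 1 (n - 1), H i = ∏ i ∈ Finset.range (n + 1), H i := by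
    apply Finset.prod_subset
    · intro i hi
      rw [Finset.mem_Icc] at hi
      rw [Finset.mem_range]
      omega
    · intro i hi hni
      rw [Finset.mem_range] at hi
      rw [Finset.mem_Icc] at hni
      have h2 : i = 0 ∨ i = n := by omega
      simp only [hH, h2, if_true]
  rw [← hB]
  apply Finset.prod_congr rfl
  intro i hi
  rw [Finset.mem_Icc] at hi
  have h2 : ¬ (i = 0 ∨ i = n) := by omega
  simp only [hH, h2, if_false]

end
end Stmt10

theorem stmt10 (n : ℕ) (hn : 1 ≤ n) (a : ℕ → ℤ) :
    ∑ p ∈ forestFinset n, ∏ k ∈ descendingSet n p, a k =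
      ∏ k ∈ Finset.Icc 1 (n - 1), (((n : ℤ) - k) * a k + k + 1) := by
  rw [Stmt10.sum_forest_eq_sum_code hn a, Stmt10.code_sum hn a]
end

section
/- Let n ≥ 1. For every integer z, Σ_p z^{r(p)} = z · ∏_{k=1}^{n−1} ((k + 1) · z + n − k), where the sum is over all rooted labeled forests p on n vertices and r(p) = #{ k ∈ {1,…,n} : p(k) = 0 or p(k) > k } is the number of vertices that are roots or descending. (Via the bijection of Igusa–Sen between rooted labeled forests on n vertices and complete exceptional sequences of type A_n with linear orientation, under which roots and descending vertices correspond to relatively projective terms, this is the generating function counting complete exceptional sequences by their number of relatively projective terms.) -/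
open Finset

open Fin.NatCast in
/-- The number of vertices of a forest `p` that are roots or descending. -/
def numRootOrDescending (n : ℕ) (p : Fin (n + 1) → Fin (n + 1)) : ℕ :=
  ((Finset.Icc 1 n).filter
    (fun k : ℕ => (p (k : Fin (n + 1)) : ℕ) = 0 ∨ k < ((p (k : Fin (n + 1)) : ℕ)))).card


/-- One step of the parent dynamics on vertices `Fin n` with root-targets `Fin m`;
roots are absorbing. -/
def stepF {n m : ℕ} (q : Fin n → Fin n ⊕ Fin m) : Fin n ⊕ Fin m → Fin n ⊕ Fin m :=
  Sum.elim q Sum.inr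

/-- Acyclicity: every vertex eventually reaches a root. -/
def Acyc {n m : ℕ} (q : Fin n → Fin n ⊕ Fin m) : Prop :=
  ∀ k : Fin n, ∃ t : ℕ, ∃ i : Fin m, (stepF q)^[t] (Sum.inl k) = Sum.inr i

noncomputable def AF (n m : ℕ) : Finset (Fin n → Fin n ⊕ Fin m) :=
  (Set.toFinite {q : Fin n → Fin n ⊕ Fin m | Acyc q}).toFinset

lemma mem_AF {n m : ℕ} {q : Fin n → Fin n ⊕ Fin m} : q ∈ AF n m ↔ Acyc q := by
  simp [AF]

/-- Number of vertices that are roots (map to an element of `Fin m`) or descending. -/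
def wt {n m : ℕ} (q : Fin n → Fin n ⊕ Fin m) : ℕ :=
  ∑ k : Fin n, if ∀ j, q k = Sum.inl j → k < j then 1 else 0

def Rch {n m : ℕ} (q : Fin n → Fin n ⊕ Fin m) (x : Fin n ⊕ Fin m) (i : Fin m) : Prop :=
  ∃ t : ℕ, (stepF q)^[t] x = Sum.inr i

open scoped Classical in
noncomputable def Bi {n m : ℕ} (q : Fin n → Fin n ⊕ Fin m) (i : Fin m) : ℕ :=
  (univ.filter (fun k : Fin n => Rch q (Sum.inl k) i)).card

-- absorbing lemmas
lemma stepF_inr {n m : ℕ} (q : Fin n → Fin n ⊕ Fin m) (i : Fin m) :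
    stepF q (Sum.inr i) = Sum.inr i := rfl

lemma iterate_inr {n m : ℕ} (q : Fin n → Fin n ⊕ Fin m) (t : ℕ) (i : Fin m) :
    (stepF q)^[t] (Sum.inr i) = Sum.inr i :=
  Function.iterate_fixed rfl t

lemma reach_mono {n m : ℕ} {q : Fin n → Fin n ⊕ Fin m} {x : Fin n ⊕ Fin m} {i : Fin m}
    {t s : ℕ} (h : (stepF q)^[t] x = Sum.inr i) (hts : t ≤ s) :
    (stepF q)^[s] x = Sum.inr i := by
  rw [← Nat.sub_add_cancel hts, Function.iterate_add_apply, h, iterate_inr]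

lemma reach_unique {n m : ℕ} {q : Fin n → Fin n ⊕ Fin m} {x : Fin n ⊕ Fin m} {i i' : Fin m}
    (h : Rch q x i) (h' : Rch q x i') : i = i' := by
  obtain ⟨t, ht⟩ := h
  obtain ⟨s, hs⟩ := h'
  rcases le_total t s with hle | hle
  · have := reach_mono ht hle
    rw [this] at hs
    exact (Sum.inr.injEq _ _ ▸ hs)
  · have := reach_mono hs hle
    rw [this] at ht
    exact (Sum.inr.injEq _ _ ▸ ht).symm

/-- A periodic (purely cyclic) vertex never reaches a root. -/
lemma not_reach_of_periodic {n m : ℕ} {q : Fin n → Fin n ⊕ Fin m} {a : Fin n} {k : ℕ}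
    (hk : 0 < k) (hcyc : (stepF q)^[k] (Sum.inl a) = Sum.inl a)
    {t : ℕ} {i : Fin m} (ht : (stepF q)^[t] (Sum.inl a) = Sum.inr i) : False := by
  have hper : ∀ u : ℕ, (stepF q)^[k * u] (Sum.inl a) = Sum.inl a := by
    intro u
    rw [Function.iterate_mul]
    exact Function.iterate_fixed hcyc u
  have hge : t ≤ k * (t + 1) := by
    calc t ≤ t + 1 := Nat.le_succ t
    _ ≤ k * (t+1) := Nat.le_mul_of_pos_left _ hk
  have := reach_mono ht hge
  rw [hper (t+1)] at this
  exact Sum.inl_ne_inr this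

section Peel

variable {n m : ℕ}

lemma castSucc_ne_last {k : ℕ} (j : Fin k) : j.castSucc ≠ Fin.last k :=
  (Fin.castSucc_lt_last j).ne

/-- Projection used when peeling off the largest vertex: the old largest vertex
becomes a new root (the last root of `Fin (m+1)`). -/
def piP : Fin (n+1) ⊕ Fin m → Fin n ⊕ Fin (m+1)
  | .inl j => if h : j = Fin.last n then .inr (Fin.last m) else .inl (j.castPred h)
  | .inr r => .inr r.castSucc

/-- Inverse of `piP`. -/
def sigP : Fin n ⊕ Fin (m+1) → Fin (n+1) ⊕ Fin m
  | .inl j => .inl j.castSucc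
  | .inr r => if h : r = Fin.last m then .inl (Fin.last n) else .inr (r.castPred h)

lemma sig_pi (x : Fin (n+1) ⊕ Fin m) : sigP (piP x) = x := by
  rcases x with j | r
  · by_cases h : j = Fin.last n
    · subst h; simp [piP, sigP]
    · simp [piP, sigP, h]
  · simp [sigP, piP, castSucc_ne_last r]

lemma pi_sig (x : Fin n ⊕ Fin (m+1)) : piP (sigP x) = x := by
  rcases x with j | r
  · simp [piP, sigP, castSucc_ne_last j]
  · by_cases h : r = Fin.last m
    · subst h; simp [piP, sigP]
    · simp [piP, sigP, h]

/-- Restriction of a parent function on `n+1` vertices to the first `n` vertices,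
rerouting children of the largest vertex to a new root. -/
def red (p : Fin (n+1) → Fin (n+1) ⊕ Fin m) : Fin n → Fin n ⊕ Fin (m+1) :=
  fun k => piP (p k.castSucc)

/-- Extension: rebuild a parent function on `n+1` vertices from one on `n` vertices
together with the parent `c` of the largest vertex. -/
def extP (q : Fin n → Fin n ⊕ Fin (m+1)) (c : Fin (n+1) ⊕ Fin m) :
    Fin (n+1) → Fin (n+1) ⊕ Fin m :=
  fun k => if h : k = Fin.last n then c else sigP (q (k.castPred h))

lemma ext_red (p : Fin (n+1) → Fin (n+1) ⊕ Fin m) : extP (red p) (p (Fin.last n)) = p := by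
  funext k
  by_cases h : k = Fin.last n
  · subst h; simp [extP]
  · simp [extP, h, red, sig_pi]

lemma red_ext (q : Fin n → Fin n ⊕ Fin (m+1)) (c : Fin (n+1) ⊕ Fin m) :
    red (extP q c) = q := by
  funext k
  simp [red, extP, castSucc_ne_last k, pi_sig]

lemma ext_last (q : Fin n → Fin n ⊕ Fin (m+1)) (c : Fin (n+1) ⊕ Fin m) :
    extP q c (Fin.last n) = c := by simp [extP]

/-- Equivariance of the dynamics away from the new root. -/
lemma ext_step (q : Fin n → Fin n ⊕ Fin (m+1)) (c : Fin (n+1) ⊕ Fin m)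
    (x : Fin n ⊕ Fin (m+1)) (hx : x ≠ Sum.inr (Fin.last m)) :
    stepF (extP q c) (sigP x) = sigP (stepF q x) := by
  rcases x with j | r
  · show extP q c j.castSucc = _
    simp [extP, castSucc_ne_last j, stepF]
  · have h : r ≠ Fin.last m := fun h => hx (by rw [h])
    simp only [sigP, dif_neg h]
    show Sum.inr (r.castPred h) = sigP (Sum.inr r)
    simp only [sigP, dif_neg h]

/-- Mirror lemma: as long as the `q`-orbit avoids the new root, the `extP q c`-orbit
of the `sigP`-image follows along. -/
lemma ext_iterate (q : Fin n → Fin n ⊕ Fin (m+1)) (c : Fin (n+1) ⊕ Fin m)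
    (x : Fin n ⊕ Fin (m+1)) :
    ∀ t : ℕ, (∀ s, s ≤ t → (stepF q)^[s] x ≠ Sum.inr (Fin.last m)) →
      (stepF (extP q c))^[t] (sigP x) = sigP ((stepF q)^[t] x) := by
  intro t
  induction t with
  | zero => intro _; rfl
  | succ t ih =>
      intro h
      rw [Function.iterate_succ_apply', Function.iterate_succ_apply',
        ih (fun s hs => h s (Nat.le_succ_of_le hs)),
        ext_step q c _ (h t (Nat.le_succ t))]

end Peel

section Transfer

variable {n m : ℕ}

/-- Valid choices of parent for the largest vertex, given the reduced forest `q`. -/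
def ValidC (q : Fin n → Fin n ⊕ Fin (m+1)) (c : Fin (n+1) ⊕ Fin m) : Prop :=
  c ≠ Sum.inl (Fin.last n) ∧
    ∀ j : Fin n, c = Sum.inl j.castSucc → ¬ Rch q (Sum.inl j) (Fin.last m)

lemma sig_inl (j : Fin n) :
    (Sum.inl j.castSucc : Fin (n+1) ⊕ Fin m) = sigP (Sum.inl j) := rfl

/-- If the `q`-orbit of `w` reaches a root other than the new one, the extended orbit
reaches the corresponding root. -/
lemma ext_reach_notlast (q : Fin n → Fin n ⊕ Fin (m+1)) (c : Fin (n+1) ⊕ Fin m)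
    {w : Fin n} {i : Fin (m+1)} {T : ℕ} (hi : i ≠ Fin.last m)
    (hT : (stepF q)^[T] (Sum.inl w) = Sum.inr i) :
    (stepF (extP q c))^[T] (Sum.inl w.castSucc) = Sum.inr (i.castPred hi) := by
  have hne : ∀ s, s ≤ T → (stepF q)^[s] (Sum.inl w) ≠ Sum.inr (Fin.last m) := by
    intro s hs hbad
    have := reach_mono hbad hs
    rw [hT] at this
    exact hi (Sum.inr_injective this)
  rw [sig_inl, ext_iterate q c _ T hne, hT]
  simp [sigP, hi]

/-- If the `q`-orbit of `w` reaches the new root, the extended orbit reaches the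
largest vertex. -/
lemma ext_reach_last (q : Fin n → Fin n ⊕ Fin (m+1)) (c : Fin (n+1) ⊕ Fin m)
    {w : Fin n} (hw : Rch q (Sum.inl w) (Fin.last m)) :
    ∃ T : ℕ, (stepF (extP q c))^[T] (Sum.inl w.castSucc) = Sum.inl (Fin.last n) := by
  classical
  have hex : ∃ t : ℕ, (stepF q)^[t] (Sum.inl w) = Sum.inr (Fin.last m) := hw
  rcases hcase : Nat.find hex with _ | T'
  · have hspec := Nat.find_spec hex
    rw [hcase] at hspec
    exact (Sum.inl_ne_inr hspec).elim
  · refine ⟨T' + 1, ?_⟩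
    have key := ext_iterate q c (Sum.inl w) T'
      (fun s hs hbad => Nat.find_min hex (by omega) hbad)
    rw [sig_inl, Function.iterate_succ_apply', key,
      ext_step q c _ (fun hbad => Nat.find_min hex (by omega) hbad)]
    have hspec : stepF q ((stepF q)^[T'] (Sum.inl w)) = Sum.inr (Fin.last m) := by
      have := Nat.find_spec hex
      rwa [hcase, Function.iterate_succ_apply'] at this
    rw [hspec]
    simp [sigP]

/-- F1 : acyclicity descends to the reduced forest. -/
lemma acyc_red {p : Fin (n+1) → Fin (n+1) ⊕ Fin m} (hp : Acyc p) : Acyc (red p) := by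
  intro k
  by_contra hcon
  push_neg at hcon
  have hall : ∀ t : ℕ, ∃ j : Fin n, (stepF (red p))^[t] (Sum.inl k) = Sum.inl j := by
    intro t
    rcases h : (stepF (red p))^[t] (Sum.inl k) with j | i
    · exact ⟨j, rfl⟩
    · exact absurd h (hcon t i)
  have hne : ∀ s : ℕ, (stepF (red p))^[s] (Sum.inl k) ≠ Sum.inr (Fin.last m) := by
    intro s hs
    obtain ⟨j, hj⟩ := hall s
    rw [hj] at hs; exact Sum.inl_ne_inr hs
  obtain ⟨t, i, ht⟩ := hp k.castSucc
  have hmir := ext_iterate (red p) (p (Fin.last n)) (Sum.inl k) t (fun s _ => hne s)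
  rw [ext_red] at hmir
  rw [sig_inl, hmir] at ht
  obtain ⟨j, hj⟩ := hall t
  rw [hj] at ht
  exact Sum.inl_ne_inr ht

/-- F3 : the parent of the largest vertex of an acyclic forest is a valid choice. -/
lemma valid_of_acyc {p : Fin (n+1) → Fin (n+1) ⊕ Fin m} (hp : Acyc p) :
    ValidC (red p) (p (Fin.last n)) := by
  constructor
  · intro hc
    obtain ⟨t, i, ht⟩ := hp (Fin.last n)
    have hfix : stepF p (Sum.inl (Fin.last n)) = Sum.inl (Fin.last n) := hc
    rw [Function.iterate_fixed hfix] at ht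
    exact Sum.inl_ne_inr ht
  · intro j hc hrch
    obtain ⟨T, hT⟩ := ext_reach_last (red p) (p (Fin.last n)) hrch
    rw [ext_red] at hT
    have hcyc : (stepF p)^[T+1] (Sum.inl (Fin.last n)) = Sum.inl (Fin.last n) := by
      rw [Function.iterate_succ_apply]
      show (stepF p)^[T] (p (Fin.last n)) = _
      rw [hc]
      exact hT
    obtain ⟨t, i, ht⟩ := hp (Fin.last n)
    exact not_reach_of_periodic (Nat.succ_pos T) hcyc ht

/-- F2 : a valid extension is acyclic. -/
lemma acyc_ext {q : Fin n → Fin n ⊕ Fin (m+1)} {c : Fin (n+1) ⊕ Fin m}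
    (hq : Acyc q) (hc : ValidC q c) : Acyc (extP q c) := by
  classical
  have H : ∀ w : Fin n, ¬ Rch q (Sum.inl w) (Fin.last m) →
      ∃ t : ℕ, ∃ i : Fin m, (stepF (extP q c))^[t] (Sum.inl w.castSucc) = Sum.inr i := by
    intro w hw
    obtain ⟨T, i, hT⟩ := hq w
    have hi : i ≠ Fin.last m := by rintro rfl; exact hw ⟨T, hT⟩
    exact ⟨T, i.castPred hi, ext_reach_notlast q c hi hT⟩
  have H3 : ∃ t : ℕ, ∃ i : Fin m, (stepF (extP q c))^[t] (Sum.inl (Fin.last n)) = Sum.inr i := by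
    rcases c with j | r
    · have hjne : j ≠ Fin.last n := by
        rintro rfl; exact hc.1 rfl
      have hnr : ¬ Rch q (Sum.inl (j.castPred hjne)) (Fin.last m) := by
        apply hc.2 (j.castPred hjne)
        rw [Fin.castSucc_castPred]
      obtain ⟨t, i, ht⟩ := H (j.castPred hjne) hnr
      rw [Fin.castSucc_castPred] at ht
      refine ⟨t + 1, i, ?_⟩
      rw [Function.iterate_succ_apply]
      have hstep : stepF (extP q (Sum.inl j)) (Sum.inl (Fin.last n)) = Sum.inl j := by
        show extP q (Sum.inl j) (Fin.last n) = _
        rw [ext_last]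
      rw [hstep]
      exact ht
    · refine ⟨1, r, ?_⟩
      show extP q (Sum.inr r) (Fin.last n) = Sum.inr r
      rw [ext_last]
  intro k
  by_cases hk : k = Fin.last n
  · subst hk; exact H3
  · have hkw : k = (k.castPred hk).castSucc := (Fin.castSucc_castPred k hk).symm
    by_cases hrch : Rch q (Sum.inl (k.castPred hk)) (Fin.last m)
    · obtain ⟨t, htl⟩ := ext_reach_last q c hrch
      rw [← hkw] at htl
      obtain ⟨t', i, ht'⟩ := H3
      refine ⟨t' + t, i, ?_⟩
      rw [Function.iterate_add_apply, htl]
      exact ht'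
    · obtain ⟨t, i, ht⟩ := H (k.castPred hk) hrch
      rw [← hkw] at ht
      exact ⟨t, i, ht⟩

end Transfer

section Weight

variable {n m : ℕ}

/-- Indicator of a `z`-weighted choice: roots contribute 1 to the statistic. -/
def eC : Fin n ⊕ Fin m → ℕ := Sum.elim (fun _ => 0) (fun _ => 1)

lemma wt_cond_ext (p : Fin (n+1) → Fin (n+1) ⊕ Fin m) (k : Fin n) :
    (∀ j, p k.castSucc = Sum.inl j → k.castSucc < j) ↔
      (∀ j, red p k = Sum.inl j → k < j) := by
  rcases h : p k.castSucc with j | r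
  · by_cases hj : j = Fin.last n
    · subst hj
      have hred : red p k = Sum.inr (Fin.last m) := by simp [red, h, piP]
      simp only [hred]
      constructor
      · intro _ j' hj'
        exact (Sum.inr_ne_inl hj').elim
      · intro _ j' hj'
        rw [Sum.inl.injEq] at hj'
        subst hj'
        exact Fin.castSucc_lt_last k
    · have hred : red p k = Sum.inl (j.castPred hj) := by simp [red, h, piP, hj]
      simp only [hred]
      constructor
      · intro hh j' hj'
        rw [Sum.inl.injEq] at hj'
        subst hj'
        have := hh j rfl
        simpa [Fin.lt_def] using this
      · intro hh j' hj'
        rw [Sum.inl.injEq] at hj'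
        subst hj'
        have := hh (j.castPred hj) rfl
        simpa [Fin.lt_def] using this
  · have hred : red p k = Sum.inr r.castSucc := by simp [red, h, piP]
    simp [hred, h]

lemma wt_last (p : Fin (n+1) → Fin (n+1) ⊕ Fin m) :
    (if ∀ j, p (Fin.last n) = Sum.inl j → Fin.last n < j then 1 else 0) = eC (p (Fin.last n)) := by
  rcases h : p (Fin.last n) with j | r
  · rw [if_neg]
    · rfl
    · intro hh
      exact absurd (hh j rfl) (not_lt.mpr (Fin.le_last j))
  · rw [if_pos]
    · rfl
    · intro j hj
      exact (Sum.inr_ne_inl hj).elim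

lemma wt_ext (p : Fin (n+1) → Fin (n+1) ⊕ Fin m) :
    wt p = wt (red p) + eC (p (Fin.last n)) := by
  unfold wt
  rw [Fin.sum_univ_castSucc]
  congr 1
  · exact Finset.sum_congr rfl fun k _ => if_congr (wt_cond_ext p k) rfl rfl
  · exact wt_last p

end Weight

section Recursion

variable {n m : ℕ}

open scoped Classical in
noncomputable def validCF (q : Fin n → Fin n ⊕ Fin (m+1)) : Finset (Fin (n+1) ⊕ Fin m) :=
  univ.filter (ValidC q)

lemma Bi_le (q : Fin n → Fin n ⊕ Fin m) (i : Fin m) : Bi q i ≤ n := by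
  classical
  calc Bi q i ≤ (univ : Finset (Fin n)).card := Finset.card_filter_le _ _
  _ = n := by simp

lemma sum_validC (q : Fin n → Fin n ⊕ Fin (m+1)) (z : ℤ) :
    ∑ c ∈ validCF q, z ^ eC c = (m : ℤ) * z + ((n : ℤ) - (Bi q (Fin.last m) : ℤ)) := by
  classical
  rw [validCF, Finset.sum_filter]
  rw [Fintype.sum_sum_type]
  have h2 : ∀ r : Fin m, (if ValidC q (Sum.inr r) then z ^ eC (Sum.inr (α := Fin (n+1)) r) else 0) = z := by
    intro r
    rw [if_pos]
    · simp [eC]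
    · exact ⟨Sum.inr_ne_inl, fun j hj => (Sum.inr_ne_inl hj).elim⟩
  have h1 : ∀ j : Fin (n+1), (if ValidC q (Sum.inl j) then z ^ eC (Sum.inl (β := Fin m) j) else 0)
      = if ValidC q (Sum.inl j) then 1 else 0 := by
    intro j
    by_cases h : ValidC q (Sum.inl j) <;> simp [h, eC]
  rw [Finset.sum_congr rfl (fun j _ => h1 j), Finset.sum_congr rfl (fun r _ => h2 r)]
  rw [Finset.sum_const, Finset.sum_boole]
  have hcard : (univ.filter (fun j : Fin (n+1) => ValidC q (Sum.inl j))).card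
      = (univ.filter (fun w : Fin n => ¬ Rch q (Sum.inl w) (Fin.last m))).card := by
    apply Finset.card_bij' (fun j hj => j.castPred (by
      rw [Finset.mem_filter] at hj
      intro hh
      exact hj.2.1 (by rw [hh])))
      (fun w _ => w.castSucc)
    · intro j hj
      exact Fin.castSucc_castPred _ _
    · intro w hw
      exact Fin.castPred_castSucc _
    · intro j hj
      rw [Finset.mem_filter] at hj ⊢
      refine ⟨Finset.mem_univ _, ?_⟩
      apply hj.2.2
      rw [Fin.castSucc_castPred]
    · intro w hw
      rw [Finset.mem_filter] at hw ⊢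
      refine ⟨Finset.mem_univ _, ?_, ?_⟩
      · exact fun h => castSucc_ne_last w (Sum.inl_injective h)
      · intro j0 hj0
        rw [Sum.inl.injEq] at hj0
        have : j0 = w := Fin.castSucc_injective _ hj0.symm
        rw [this]
        exact hw.2
  have hnot : (univ.filter (fun w : Fin n => ¬ Rch q (Sum.inl w) (Fin.last m))).card
      = n - Bi q (Fin.last m) := by
    rw [Finset.filter_not, Finset.card_sdiff_of_subset (Finset.filter_subset _ _)]
    simp [Bi]
  rw [hcard, hnot]
  have hle := Bi_le q (Fin.last m)
  rw [Finset.card_univ, Fintype.card_fin]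
  push_cast [Nat.cast_sub hle]
  ring

lemma rec_sum (z : ℤ) :
    ∑ p ∈ AF (n+1) m, z ^ wt p
      = ∑ q ∈ AF n (m+1), z ^ wt q * ((m : ℤ) * z + ((n : ℤ) - (Bi q (Fin.last m) : ℤ))) := by
  classical
  have : ∀ q ∈ AF n (m+1), z ^ wt q * ((m : ℤ) * z + ((n : ℤ) - (Bi q (Fin.last m) : ℤ)))
      = ∑ c ∈ validCF q, z ^ (wt q + eC c) := by
    intro q _
    rw [← sum_validC q z, Finset.mul_sum]
    exact Finset.sum_congr rfl fun c _ => by rw [pow_add]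
  rw [Finset.sum_congr rfl this, Finset.sum_sigma']
  apply Finset.sum_nbij' (i := fun p => (⟨red p, p (Fin.last n)⟩ : Σ _ : Fin n → Fin n ⊕ Fin (m+1), Fin (n+1) ⊕ Fin m))
    (j := fun s => extP s.1 s.2)
  · intro p hp
    rw [mem_AF] at hp
    rw [Finset.mem_sigma]
    exact ⟨mem_AF.mpr (acyc_red hp), by
      rw [validCF, Finset.mem_filter]
      exact ⟨Finset.mem_univ _, valid_of_acyc hp⟩⟩
  · intro s hs
    rw [Finset.mem_sigma, mem_AF, validCF, Finset.mem_filter] at hs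
    exact mem_AF.mpr (acyc_ext hs.1 hs.2.2)
  · intro p _
    exact ext_red p
  · intro s _
    refine Sigma.ext ?_ ?_
    · exact red_ext s.1 s.2
    · rw [ext_last]
  · intro p _
    rw [wt_ext]

end Recursion

section Symmetry

variable {n m : ℕ}

/-- L3a : every vertex of an acyclic forest lies below exactly one root. -/
lemma sum_Bi {q : Fin n → Fin n ⊕ Fin m} (hq : Acyc q) : ∑ i : Fin m, Bi q i = n := by
  classical
  have hex : ∀ k : Fin n, ∃ i : Fin m, Rch q (Sum.inl k) i := by
    intro k
    obtain ⟨t, i, ht⟩ := hq k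
    exact ⟨i, t, ht⟩
  set F : Fin n → Fin m := fun k => (hex k).choose with hF
  have hFspec : ∀ k, Rch q (Sum.inl k) (F k) := fun k => (hex k).choose_spec
  have := Finset.card_eq_sum_card_fiberwise (f := F) (s := univ) (t := univ)
    (fun k _ => Finset.mem_univ _)
  rw [Finset.card_univ, Fintype.card_fin] at this
  refine Eq.trans ?_ this.symm
  apply Finset.sum_congr rfl
  intro i _
  unfold Bi
  congr 1
  apply Finset.filter_congr
  intro k _
  constructor
  · intro h
    exact reach_unique (hFspec k) h
  · intro h
    exact h ▸ hFspec k

/-- Relabeling the roots by a permutation. -/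
def tauQ (σ : Equiv.Perm (Fin m)) (q : Fin n → Fin n ⊕ Fin m) : Fin n → Fin n ⊕ Fin m :=
  fun k => Sum.map id σ (q k)

lemma tau_step (σ : Equiv.Perm (Fin m)) (q : Fin n → Fin n ⊕ Fin m) (x : Fin n ⊕ Fin m) :
    stepF (tauQ σ q) (Sum.map id σ x) = Sum.map id σ (stepF q x) := by
  rcases x with k | r <;> rfl

lemma tau_iterate (σ : Equiv.Perm (Fin m)) (q : Fin n → Fin n ⊕ Fin m) (x : Fin n ⊕ Fin m)
    (t : ℕ) : (stepF (tauQ σ q))^[t] (Sum.map id σ x) = Sum.map id σ ((stepF q)^[t] x) := by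
  induction t with
  | zero => rfl
  | succ t ih => rw [Function.iterate_succ_apply', Function.iterate_succ_apply', ih, tau_step]

lemma tau_rch (σ : Equiv.Perm (Fin m)) (q : Fin n → Fin n ⊕ Fin m) (k : Fin n) (i : Fin m) :
    Rch (tauQ σ q) (Sum.inl k) i ↔ Rch q (Sum.inl k) (σ.symm i) := by
  constructor
  · rintro ⟨t, ht⟩
    refine ⟨t, ?_⟩
    have : (Sum.inl k : Fin n ⊕ Fin m) = Sum.map id σ (Sum.inl k) := rfl
    rw [this, tau_iterate] at ht
    rcases h : (stepF q)^[t] (Sum.inl k) with j | r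
    · rw [h] at ht; exact (Sum.inl_ne_inr ht).elim
    · rw [h] at ht
      simp only [Sum.map_inr] at ht
      rw [Sum.inr.injEq]
      have h2 : σ r = i := Sum.inr_injective ht
      rw [← h2, Equiv.symm_apply_apply]
  · rintro ⟨t, ht⟩
    refine ⟨t, ?_⟩
    have : (Sum.inl k : Fin n ⊕ Fin m) = Sum.map id σ (Sum.inl k) := rfl
    rw [this, tau_iterate, ht]
    simp

lemma tau_tau (σ : Equiv.Perm (Fin m)) (hσ : ∀ r, σ (σ r) = r) (q : Fin n → Fin n ⊕ Fin m) :
    tauQ σ (tauQ σ q) = q := by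
  funext k
  unfold tauQ
  rcases h : q k with j | r <;> simp [h, hσ]

lemma tau_acyc (σ : Equiv.Perm (Fin m)) {q : Fin n → Fin n ⊕ Fin m} (hq : Acyc q) :
    Acyc (tauQ σ q) := by
  intro k
  obtain ⟨t, i, ht⟩ := hq k
  refine ⟨t, σ i, ?_⟩
  have : (Sum.inl k : Fin n ⊕ Fin m) = Sum.map id σ (Sum.inl k) := rfl
  rw [this, tau_iterate, ht]
  rfl

lemma tau_wt (σ : Equiv.Perm (Fin m)) (q : Fin n → Fin n ⊕ Fin m) :
    wt (tauQ σ q) = wt q := by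
  unfold wt
  apply Finset.sum_congr rfl
  intro k _
  apply if_congr _ rfl rfl
  unfold tauQ
  rcases h : q k with j | r <;> simp [h]

open scoped Classical in
lemma tau_Bi (σ : Equiv.Perm (Fin m)) (q : Fin n → Fin n ⊕ Fin m) (i : Fin m) :
    Bi (tauQ σ q) i = Bi q (σ.symm i) := by
  unfold Bi
  congr 1
  apply Finset.filter_congr
  intro k _
  simp only [tau_rch]

/-- L3b : the weighted count of vertices below root `i` is independent of `i`. -/
lemma sum_Bi_indep (z : ℤ) (i i' : Fin m) :
    ∑ q ∈ AF n m, z ^ wt q * (Bi q i : ℤ) = ∑ q ∈ AF n m, z ^ wt q * (Bi q i' : ℤ) := by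
  classical
  set σ : Equiv.Perm (Fin m) := Equiv.swap i i' with hσ
  have hinv : ∀ r, σ (σ r) = r := fun r => Equiv.swap_apply_self i i' r
  apply Finset.sum_nbij' (i := fun q => tauQ σ q) (j := fun q => tauQ σ q)
  · intro q hq
    exact mem_AF.mpr (tau_acyc σ (mem_AF.mp hq))
  · intro q hq
    exact mem_AF.mpr (tau_acyc σ (mem_AF.mp hq))
  · intro q _
    exact tau_tau σ hinv q
  · intro q _
    exact tau_tau σ hinv q
  · intro q _
    rw [tau_wt, tau_Bi]
    congr 2
    rw [hσ]
    simp [Equiv.symm_swap, Equiv.swap_apply_left]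

/-- L3c : summing over all roots. -/
lemma sum_Bi_last (z : ℤ) :
    ((m : ℤ) + 1) * ∑ q ∈ AF n (m+1), z ^ wt q * (Bi q (Fin.last m) : ℤ)
      = (n : ℤ) * ∑ q ∈ AF n (m+1), z ^ wt q := by
  have h1 : ((m : ℤ) + 1) * ∑ q ∈ AF n (m+1), z ^ wt q * (Bi q (Fin.last m) : ℤ)
      = ∑ i : Fin (m+1), ∑ q ∈ AF n (m+1), z ^ wt q * (Bi q i : ℤ) := by
    rw [Finset.sum_congr rfl (fun i _ => sum_Bi_indep z i (Fin.last m)), Finset.sum_const,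
      Finset.card_univ, Fintype.card_fin]
    push_cast
    rw [nsmul_eq_mul]
    push_cast
    ring
  rw [h1, Finset.sum_comm, Finset.mul_sum]
  apply Finset.sum_congr rfl
  intro q hq
  rw [← Finset.mul_sum, ← Nat.cast_sum]
  rw [sum_Bi (mem_AF.mp hq)]
  ring

end Symmetry

section Main

/-- The combined recursion. -/
lemma rec_closed (n m : ℕ) (z : ℤ) :
    ((m : ℤ) + 1) * ∑ p ∈ AF (n+1) m, z ^ wt p
      = (m : ℤ) * (((m : ℤ) + 1) * z + (n : ℤ)) * ∑ q ∈ AF n (m+1), z ^ wt q := by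
  rw [rec_sum z]
  have expand : ∑ q ∈ AF n (m+1), z ^ wt q * ((m:ℤ)*z + ((n:ℤ) - (Bi q (Fin.last m) : ℤ)))
      = ((m:ℤ)*z + (n:ℤ)) * (∑ q ∈ AF n (m+1), z ^ wt q)
        - ∑ q ∈ AF n (m+1), z ^ wt q * (Bi q (Fin.last m) : ℤ) := by
    rw [Finset.mul_sum, ← Finset.sum_sub_distrib]
    exact Finset.sum_congr rfl fun q _ => by ring
  rw [expand]
  have h2 := sum_Bi_last (n := n) (m := m) z
  linear_combination -h2

/-- Base case : a single vertex. -/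
lemma base_case (m : ℕ) (z : ℤ) :
    ∑ p ∈ AF 1 m, z ^ wt p = (m : ℤ) * z := by
  classical
  have hAF : AF 1 m = Finset.image (fun r : Fin m => fun _ : Fin 1 => Sum.inr r) univ := by
    ext p
    rw [mem_AF, Finset.mem_image]
    constructor
    · intro hp
      rcases h : p 0 with j | r
      · exfalso
        have hj : j = 0 := Subsingleton.elim _ _
        rw [hj] at h
        have hfix : stepF p (Sum.inl 0) = Sum.inl 0 := h
        obtain ⟨t, i, ht⟩ := hp 0
        rw [Function.iterate_fixed hfix] at ht
        exact Sum.inl_ne_inr ht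
      · refine ⟨r, Finset.mem_univ _, ?_⟩
        funext k
        have : k = 0 := Subsingleton.elim _ _
        rw [this, h]
    · rintro ⟨r, _, rfl⟩
      intro k
      refine ⟨1, r, ?_⟩
      rfl
  rw [hAF, Finset.sum_image (by
    intro r _ r' _ hrr
    have := congrFun hrr 0
    exact Sum.inr_injective this)]
  have hwt : ∀ r : Fin m, wt (fun _ : Fin 1 => (Sum.inr r : Fin 1 ⊕ Fin m)) = 1 := by
    intro r
    unfold wt
    simp
  rw [Finset.sum_congr rfl (fun r _ => by rw [hwt r, pow_one])]
  rw [Finset.sum_const, Finset.card_univ, Fintype.card_fin, nsmul_eq_mul]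

/-- The closed form, proved by induction peeling off the largest vertex. -/
lemma closed_form : ∀ n : ℕ, 1 ≤ n → ∀ m : ℕ, ∀ z : ℤ,
    ∑ p ∈ AF n m, z ^ wt p
      = (m : ℤ) * z * ∏ k ∈ Finset.range (n-1), (((m : ℤ) + (k : ℤ) + 1) * z + ((n : ℤ) - 1 - (k : ℤ))) := by
  intro n hn
  induction n, hn using Nat.le_induction with
  | base =>
      intro m z
      simpa using base_case m z
  | succ n hn ih =>
      intro m z
      have hrec := rec_closed n m z
      have hih := ih (m+1) z
      push_cast at hih
      rw [hih] at hrec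
      have hm1 : ((m : ℤ) + 1) ≠ 0 := by positivity
      apply mul_left_cancel₀ hm1
      rw [hrec]
      -- peel off the k = 0 factor of the product on the right
      obtain ⟨n', rfl⟩ : ∃ n', n = n' + 1 := ⟨n - 1, (Nat.succ_pred_eq_of_pos hn).symm⟩
      rw [show n' + 1 + 1 - 1 = n' + 1 from rfl, Finset.prod_range_succ',
        show n' + 1 - 1 = n' from rfl]
      push_cast
      have hprod : ∀ k ∈ Finset.range n',
          ((m : ℤ) + 1 + (k : ℤ) + 1) * z + ((n' : ℤ) + 1 - 1 - (k : ℤ))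
            = ((m : ℤ) + ((k : ℤ) + 1) + 1) * z + ((n' : ℤ) + 1 + 1 - 1 - ((k : ℤ) + 1)) := by
        intro k _
        ring
      rw [Finset.prod_congr rfl hprod]
      ring

end Main

section FinalTransfer

variable {n : ℕ}

def toQ (p : Fin (n+1) → Fin (n+1)) : Fin n → Fin n ⊕ Fin 1 :=
  fun k => if h : p k.succ = 0 then Sum.inr 0 else Sum.inl ((p k.succ).pred h)

def toP (q : Fin n → Fin n ⊕ Fin 1) : Fin (n+1) → Fin (n+1) :=
  fun x => if h : x = 0 then 0 else Sum.elim (fun j : Fin n => j.succ) (fun _ => 0) (q (x.pred h))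

def iotaF : Fin (n+1) → Fin n ⊕ Fin 1 :=
  fun x => if h : x = 0 then Sum.inr 0 else Sum.inl (x.pred h)

lemma iota_eq_inr {x : Fin (n+1)} {i : Fin 1} (h : iotaF x = Sum.inr i) : x = 0 := by
  by_cases hx : x = 0
  · exact hx
  · rw [iotaF, dif_neg hx] at h
    exact (Sum.inl_ne_inr h).elim

lemma conj_step (p : Fin (n+1) → Fin (n+1)) (hp : p 0 = 0) (x : Fin (n+1)) :
    stepF (toQ p) (iotaF x) = iotaF (p x) := by
  by_cases h : x = 0
  · subst h
    rw [hp]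
    rfl
  · simp only [iotaF, dif_neg h]
    show toQ p (x.pred h) = _
    simp only [toQ, Fin.succ_pred]

lemma conj_iter (p : Fin (n+1) → Fin (n+1)) (hp : p 0 = 0) (x : Fin (n+1)) (t : ℕ) :
    (stepF (toQ p))^[t] (iotaF x) = iotaF (p^[t] x) := by
  induction t generalizing x with
  | zero => rfl
  | succ t ih =>
      rw [Function.iterate_succ_apply, Function.iterate_succ_apply, conj_step p hp, ih]

lemma toQ_toP (q : Fin n → Fin n ⊕ Fin 1) : toQ (toP q) = q := by
  funext k
  have hk : (k.succ : Fin (n+1)) ≠ 0 := Fin.succ_ne_zero k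
  rcases h : q k with j | r
  · have : toP q k.succ = j.succ := by
      rw [toP, dif_neg hk, Fin.pred_succ, h]
      rfl
    rw [toQ]
    rw [dif_neg (by rw [this]; exact Fin.succ_ne_zero j)]
    congr 1
    have h2 : (toP q k.succ).pred (by rw [this]; exact Fin.succ_ne_zero j) = j.succ.pred (Fin.succ_ne_zero j) := by
      congr 1
    rw [h2, Fin.pred_succ]
  · have : toP q k.succ = 0 := by
      rw [toP, dif_neg hk, Fin.pred_succ, h]
      rfl
    rw [toQ, dif_pos this]
    congr 1
    exact Subsingleton.elim _ _

lemma toP_toQ {p : Fin (n+1) → Fin (n+1)} (hp : IsForest p) : toP (toQ p) = p := by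
  funext x
  by_cases h : x = 0
  · subst h
    rw [toP, dif_pos rfl, hp.1]
  · rw [toP, dif_neg h, toQ]
    by_cases h2 : p ((x.pred h).succ) = 0
    · rw [dif_pos h2, Sum.elim_inr]
      rw [Fin.succ_pred] at h2
      exact h2.symm
    · rw [dif_neg h2, Sum.elim_inl, Fin.succ_pred, Fin.succ_pred]

lemma acyc_toQ {p : Fin (n+1) → Fin (n+1)} (hp : IsForest p) : Acyc (toQ p) := by
  intro k
  obtain ⟨t, ht⟩ := hp.2 k.succ
  refine ⟨t, 0, ?_⟩
  have : (Sum.inl k : Fin n ⊕ Fin 1) = iotaF k.succ := by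
    rw [iotaF, dif_neg (Fin.succ_ne_zero k), Fin.pred_succ]
  rw [this, conj_iter p hp.1, ht]
  rfl

lemma forest_toP {q : Fin n → Fin n ⊕ Fin 1} (hq : Acyc q) : IsForest (toP q) := by
  have h0 : toP q 0 = 0 := by rw [toP, dif_pos rfl]
  refine ⟨h0, ?_⟩
  intro x
  by_cases h : x = 0
  · exact ⟨0, h⟩
  · obtain ⟨t, i, ht⟩ := hq (x.pred h)
    refine ⟨t, ?_⟩
    have hiota : (Sum.inl (x.pred h) : Fin n ⊕ Fin 1) = iotaF x := by
      rw [iotaF, dif_neg h]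
    rw [hiota] at ht
    have := conj_iter (toP q) h0 x t
    rw [toQ_toP] at this
    rw [this] at ht
    exact iota_eq_inr ht

open Fin.NatCast in
lemma num_eq_wt {p : Fin (n+1) → Fin (n+1)} : numRootOrDescending n p = wt (toQ p) := by
  classical
  have hwt : wt (toQ p) = (univ.filter
      (fun k : Fin n => ∀ j, toQ p k = Sum.inl j → k < j)).card := by
    rw [wt, Finset.sum_boole, Nat.cast_id]
  rw [hwt, numRootOrDescending]
  apply Finset.card_bij' (i := fun k hk => (⟨k - 1, by
      rw [Finset.mem_filter, Finset.mem_Icc] at hk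
      omega⟩ : Fin n))
    (j := fun k' hk' => (k' : ℕ) + 1)
  · -- membership forward
    intro k hk
    rw [Finset.mem_filter, Finset.mem_Icc] at hk
    rw [Finset.mem_filter]
    refine ⟨Finset.mem_univ _, ?_⟩
    obtain ⟨⟨hk1, hk2⟩, hcond⟩ := hk
    have hkval : ((k : Fin (n+1)) : ℕ) = k := by
      apply Fin.val_cast_of_lt
      omega
    have hsucc : (⟨k - 1, by omega⟩ : Fin n).succ = (k : Fin (n+1)) := by
      apply Fin.ext
      simp only [Fin.val_succ, hkval]
      omega
    intro j hj
    rw [toQ] at hj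
    by_cases h : p ((⟨k - 1, by omega⟩ : Fin n).succ) = 0
    · rw [dif_pos h] at hj
      exact (Sum.inr_ne_inl hj).elim
    · rw [dif_neg h] at hj
      rw [Sum.inl.injEq] at hj
      subst hj
      rw [Fin.lt_def]
      simp only [Fin.coe_pred, Fin.val_mk]
      rw [hsucc] at h ⊢
      have hv0 : ((p (k : Fin (n+1))) : ℕ) ≠ 0 := fun hc => h (Fin.ext hc)
      rcases hcond with hc0 | hlt
      · exact absurd hc0 hv0
      · omega
  · -- left inverse
    intro k hk
    rw [Finset.mem_filter, Finset.mem_Icc] at hk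
    show k - 1 + 1 = k
    omega
  · -- right inverse
    intro k' _
    apply Fin.ext
    show (k' : ℕ) + 1 - 1 = (k' : ℕ)
    omega
  · -- membership backward
    intro k' hk'
    rw [Finset.mem_filter] at hk'
    rw [Finset.mem_filter, Finset.mem_Icc]
    have hb := hk'.2
    refine ⟨⟨by omega, by omega⟩, ?_⟩
    have hkval : (((k' : ℕ) + 1 : ℕ) : Fin (n+1)) = k'.succ := by
      apply Fin.ext
      rw [Fin.val_cast_of_lt (by omega)]
      simp
    rw [hkval]
    by_cases h : p k'.succ = 0
    · left
      rw [h]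
      rfl
    · right
      have := hb ((p k'.succ).pred h) (by rw [toQ, dif_neg h])
      rw [Fin.lt_def, Fin.coe_pred] at this
      omega

theorem stmt11' (hn : 1 ≤ n) (z : ℤ) :
    ∑ p ∈ forestFinset n, z ^ numRootOrDescending n p =
      z * ∏ k ∈ Finset.Icc 1 (n - 1), (((k : ℤ) + 1) * z + ((n : ℤ) - k)) := by
  classical
  have hsum : ∑ p ∈ forestFinset n, z ^ numRootOrDescending n p
      = ∑ q ∈ AF n 1, z ^ wt q := by
    apply Finset.sum_nbij' (i := toQ) (j := toP)
    · intro p hp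
      rw [forestFinset, Set.Finite.mem_toFinset] at hp
      exact mem_AF.mpr (acyc_toQ hp)
    · intro q hq
      rw [forestFinset, Set.Finite.mem_toFinset]
      exact forest_toP (mem_AF.mp hq)
    · intro p hp
      rw [forestFinset, Set.Finite.mem_toFinset] at hp
      exact toP_toQ hp
    · intro q _
      exact toQ_toP q
    · intro p _
      rw [num_eq_wt]
  rw [hsum, closed_form n hn 1 z]
  have hIcc : Finset.Icc 1 (n-1) = Finset.Ico 1 n := by
    rw [← Finset.Ico_add_one_right_eq_Icc]
    congr 1
    omega
  rw [hIcc, Finset.prod_Ico_eq_prod_range]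
  have hfac : ∀ k ∈ Finset.range (n-1),
      (((1 + k : ℕ) : ℤ) + 1) * z + ((n : ℤ) - ((1 + k : ℕ) : ℤ))
        = (((1:ℕ) : ℤ) + (k : ℤ) + 1) * z + ((n : ℤ) - 1 - (k : ℤ)) := by
    intro k _
    push_cast
    ring
  rw [Finset.prod_congr rfl hfac, Nat.cast_one, one_mul]

end FinalTransfer

theorem stmt11 (n : ℕ) (hn : 1 ≤ n) (z : ℤ) :
    ∑ p ∈ forestFinset n, z ^ numRootOrDescending n p =
      z * ∏ k ∈ Finset.Icc 1 (n - 1), (((k : ℤ) + 1) * z + ((n : ℤ) - k)) := by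
  exact stmt11' hn z
end
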